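/- arXiv:1707.05718 — 5 statements merged into one kernel-verified Lean document; each statement's English description precedes it below -/
import Mathlib

section
/- (Soundness of EqFSCL.) For all closed terms P, Q ∈ S_A, if EqFSCL ⊢ P = Q then se(P) = se(Q). -/
/-- Evaluation trees over a set `A` of atoms, with leaves `T` and `F`. -/
inductive ETree (A : Type) : Type
  | leafT : ETree A
  | leafF : ETree A
  | node : ETree A → A → ETree A → ETree A

namespace ETree

/-- Leaf replacement `X[T↦Y, F↦Z]`. -/
def repl {A : Type} : ETree A → ETree A → ETree A → ETree A
  | leafT, y, _ => y
  | leafF, _, z => z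
  | node l a r, y, z => node (repl l y z) a (repl r y z)

end ETree

/-- Closed sequential propositional statements over `A`:
`P ::= a | T | F | ¬P | P ∧❛ P | P ∨❛ P`. -/
inductive STerm (A : Type) : Type
  | atom : A → STerm A
  | tt : STerm A
  | ff : STerm A
  | neg : STerm A → STerm A
  | and : STerm A → STerm A → STerm A
  | or : STerm A → STerm A → STerm A

/-- The short-circuit evaluation function `se : S_A → T_A`. -/
def se {A : Type} : STerm A → ETree A
  | .tt => .leafT
  | .ff => .leafF
  | .atom a => .node .leafT a .leafF
  | .neg P => (se P).repl .leafF .leafT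
  | .and P Q => (se P).repl (se Q) .leafF
  | .or P Q => (se P).repl .leafT (se Q)

/-- Derivability from the axiom set EqFSCL: the least congruence (w.r.t. `¬`, `∧❛`, `∨❛`)
on closed terms containing all closed substitution instances of the axioms (F1)-(F10). -/
inductive EqFSCL {A : Type} : STerm A → STerm A → Prop
  | refl (P) : EqFSCL P P
  | symm {P Q} : EqFSCL P Q → EqFSCL Q P
  | trans {P Q R} : EqFSCL P Q → EqFSCL Q R → EqFSCL P R
  | neg_congr {P Q} : EqFSCL P Q → EqFSCL (.neg P) (.neg Q)
  | and_congr {P P' Q Q'} : EqFSCL P Q → EqFSCL P' Q' → EqFSCL (.and P P') (.and Q Q')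
  | or_congr {P P' Q Q'} : EqFSCL P Q → EqFSCL P' Q' → EqFSCL (.or P P') (.or Q Q')
  | F1 : EqFSCL .ff (.neg .tt)
  | F2 (x y) : EqFSCL (.or x y) (.neg (.and (.neg x) (.neg y)))
  | F3 (x) : EqFSCL (.neg (.neg x)) x
  | F4 (x) : EqFSCL (.and .tt x) x
  | F5 (x) : EqFSCL (.or x .ff) x
  | F6 (x) : EqFSCL (.and .ff x) .ff
  | F7 (x y z) : EqFSCL (.and (.and x y) z) (.and x (.and y z))
  | F8 (x) : EqFSCL (.and (.neg x) .ff) (.and x .ff)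
  | F9 (x y) : EqFSCL (.or (.and x .ff) y) (.and (.or x .tt) y)
  | F10 (x y z) : EqFSCL (.or (.and x y) (.and z .ff))
      (.and (.or x (.and z .ff)) (.or y (.and z .ff)))

/-!
Leaf replacement is an associative substitution on evaluation trees with `T`, `F` as its unit,
and `se` sends every connective to a leaf replacement. Both sides of each axiom therefore
normalise, by these two laws, to the same replacement of the evaluation trees of the variables.
-/

namespace ETree

variable {A : Type}

theorem repl_repl (X y z y' z' : ETree A) :
    (X.repl y z).repl y' z' = X.repl (y.repl y' z') (z.repl y' z') := by
  induction X with
  | leafT | leafF => rfl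
  | node l a r ihl ihr => simp only [repl, ihl, ihr]

@[simp]
theorem repl_leafT_leafF (X : ETree A) : X.repl leafT leafF = X := by
  induction X with
  | leafT | leafF => rfl
  | node l a r ihl ihr => simp only [repl, ihl, ihr]

end ETree

theorem eqFSCL_sound_general {A : Type} (P Q : STerm A) :
    EqFSCL P Q → se P = se Q := by
  intro h
  induction h with
  | refl => rfl
  | symm _ ih => exact ih.symm
  | trans _ _ ih₁ ih₂ => exact ih₁.trans ih₂
  | neg_congr _ ih => simp only [se, ih]
  | and_congr _ _ ih₁ ih₂ | or_congr _ _ ih₁ ih₂ => simp only [se, ih₁, ih₂]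
  | _ => simp [se, ETree.repl_repl, ETree.repl]

/-- Soundness of EqFSCL: derivably equal closed terms have equal evaluation trees. -/
theorem eqFSCL_sound {A : Type} [Nonempty A] (P Q : STerm A) :
    EqFSCL P Q → se P = se Q :=
  eqFSCL_sound_general P Q
end

section
/- (Completeness of EqFSCL for closed terms.) For all closed terms P, Q ∈ S_A, EqFSCL ⊢ P = Q if and only if se(P) = se(Q). -/
/-!
Soundness is a direct check of the axioms against `se`. For completeness, every term is
provably equal to a normal form: a T-term, an F-term, or a T-term followed by a *-term, where
*-terms are built by `∧❛` and `∨❛` from literals `(a ∧❛ P) ∨❛ G` and `(¬a ∧❛ P) ∨❛ G` with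
`P` a T-term and `G` an F-term. It then suffices that `se` is injective on normal forms up to
associativity of *-terms. This rests on unique-decomposition properties of the trees of
*-terms: such a tree is `L[T ↦ P, F ↦ Q]` for a unique literal tree `L` and continuation pair
`(P, Q)`; it has no nontrivial prefix whose leaves are all `T`; it is never both a conjunction
and a disjunction of *-trees; and any two of its splittings as a conjunction differ by
reassociation. These are proved together by induction on the size of the tree.
-/

namespace ETree

variable {A : Type}

attribute [simp] repl

theorem repl_repl_s2 (X Y Z U V : ETree A) :
    (X.repl Y Z).repl U V = X.repl (Y.repl U V) (Z.repl U V) := by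
  induction X with
  | leafT | leafF => rfl
  | node l a r hl hr => simp [hl, hr]

def replT (X Y : ETree A) : ETree A := X.repl Y leafF

def replF (X Z : ETree A) : ETree A := X.repl leafT Z

def swap (X : ETree A) : ETree A := X.repl leafF leafT

@[simp] theorem replT_leafT (Y : ETree A) : replT leafT Y = Y := rfl
@[simp] theorem replT_leafF (Y : ETree A) : replT leafF Y = leafF := rfl
@[simp] theorem replT_node (l : ETree A) (a : A) (r Y : ETree A) :
    replT (node l a r) Y = node (replT l Y) a (replT r Y) := rfl
@[simp] theorem replF_leafT (Z : ETree A) : replF leafT Z = leafT := rfl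
@[simp] theorem replF_node (l : ETree A) (a : A) (r Z : ETree A) :
    replF (node l a r) Z = node (replF l Z) a (replF r Z) := rfl
@[simp] theorem swap_node (l : ETree A) (a : A) (r : ETree A) :
    swap (node l a r) = node (swap l) a (swap r) := rfl

@[simp] theorem replT_leafT_right (X : ETree A) : replT X leafT = X := repl_leafT_leafF X
@[simp] theorem replF_leafF_right (X : ETree A) : replF X leafF = X := repl_leafT_leafF X

theorem replT_replT (X Y Z : ETree A) : replT (replT X Y) Z = replT X (replT Y Z) := by
  simp [replT, repl_repl_s2]

theorem replT_repl (X P Q Y : ETree A) :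
    replT (X.repl P Q) Y = X.repl (replT P Y) (replT Q Y) := by
  simp [replT, repl_repl_s2]

theorem replF_repl (X P Q Y : ETree A) :
    replF (X.repl P Q) Y = X.repl (replF P Y) (replF Q Y) := by
  simp [replF, repl_repl_s2]

@[simp] theorem swap_swap (X : ETree A) : swap (swap X) = X := by
  simp [swap, repl_repl_s2]

theorem swap_injective : Function.Injective (swap : ETree A → ETree A) :=
  Function.LeftInverse.injective swap_swap

theorem swap_replT (X Y : ETree A) : swap (replT X Y) = replF (swap X) (swap Y) := by
  simp [swap, replT, replF, repl_repl_s2]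

theorem swap_replF (X Y : ETree A) : swap (replF X Y) = replT (swap X) (swap Y) := by
  simp [swap, replT, replF, repl_repl_s2]

theorem replF_eq_swap_replT (X Y : ETree A) : replF X Y = swap (replT (swap X) (swap Y)) := by
  rw [swap_replT, swap_swap, swap_swap]

def HasT : ETree A → Prop
  | leafT => True
  | leafF => False
  | node l _ r => HasT l ∨ HasT r

def HasF : ETree A → Prop
  | leafT => False
  | leafF => True
  | node l _ r => HasF l ∨ HasF r

attribute [simp] HasT HasF

theorem hasT_repl (X Y Z : ETree A) :
    HasT (X.repl Y Z) ↔ HasT X ∧ HasT Y ∨ HasF X ∧ HasT Z := by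
  induction X with
  | leafT | leafF => simp
  | node l a r hl hr => simp only [repl, HasT, HasF, hl, hr]; tauto

theorem hasF_repl (X Y Z : ETree A) :
    HasF (X.repl Y Z) ↔ HasT X ∧ HasF Y ∨ HasF X ∧ HasF Z := by
  induction X with
  | leafT | leafF => simp
  | node l a r hl hr => simp only [repl, HasT, HasF, hl, hr]; tauto

theorem hasT_or_hasF (X : ETree A) : HasT X ∨ HasF X := by
  induction X with
  | leafT | leafF => simp
  | node l a r hl hr => simp only [HasT, HasF]; tauto

@[simp] theorem hasT_swap (X : ETree A) : HasT (swap X) ↔ HasF X := by simp [swap, hasT_repl]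

@[simp] theorem hasF_swap (X : ETree A) : HasF (swap X) ↔ HasT X := by simp [swap, hasF_repl]

def IsTTree (X : ETree A) : Prop := ¬ HasF X

def IsFTree (X : ETree A) : Prop := ¬ HasT X

def Mixed (X : ETree A) : Prop := HasT X ∧ HasF X

theorem isTTree_node {l : ETree A} {a : A} {r : ETree A} :
    IsTTree (node l a r) ↔ IsTTree l ∧ IsTTree r := by
  simp [IsTTree]

theorem isTTree_leafT : IsTTree (leafT : ETree A) := by simp [IsTTree]

theorem IsTTree.hasT {S : ETree A} (hS : IsTTree S) : HasT S := (hasT_or_hasF S).resolve_right hS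

theorem IsFTree.hasF {U : ETree A} (hU : IsFTree U) : HasF U := (hasT_or_hasF U).resolve_left hU

@[simp] theorem isTTree_swap {X : ETree A} : IsTTree (swap X) ↔ IsFTree X := by
  simp [IsTTree, IsFTree]

theorem isTTree_replT {S S' : ETree A} (hS : IsTTree S) (hS' : IsTTree S') :
    IsTTree (replT S S') := by
  simp_all [IsTTree, ETree.replT, hasF_repl]

theorem IsTTree.repl_eq {S : ETree A} (hS : IsTTree S) (Y Z : ETree A) :
    S.repl Y Z = replT S Y := by
  induction S with
  | leafT => rfl
  | leafF => simp [IsTTree] at hS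
  | node l a r hl hr =>
      rw [isTTree_node] at hS
      simp [hl hS.1, hr hS.2]

theorem IsFTree.repl_eq {U : ETree A} (hU : IsFTree U) (Y Z : ETree A) :
    U.repl Y Z = replF U Z := by
  induction U with
  | leafT => simp [IsFTree] at hU
  | leafF => rfl
  | node l a r hl hr =>
      simp only [IsFTree, HasT, not_or] at hU
      simp [hl hU.1, hr hU.2]

/-- All leaves of an F-tree are F, so only the grafted tree matters, not the leaf label. -/
theorem IsFTree.replF_eq_replT_swap {U : ETree A} (hU : IsFTree U) (W : ETree A) :
    replF U W = replT (swap U) W := by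
  simp only [replT, swap, replF, repl_repl_s2, repl]
  rw [hU.repl_eq, hU.repl_eq]

theorem mixed_replT {X Y : ETree A} (hX : HasT X) (hY : Mixed Y) : Mixed (replT X Y) := by
  simp_all [Mixed, ETree.replT, hasT_repl, hasF_repl]

theorem mixed_replF {X Y : ETree A} (hX : HasF X) (hY : Mixed Y) : Mixed (replF X Y) := by
  simp_all [Mixed, ETree.replF, hasT_repl, hasF_repl]

def size : ETree A → ℕ
  | leafT | leafF => 1
  | node l _ r => size l + size r + 1

attribute [simp] size

theorem one_le_size (X : ETree A) : 1 ≤ size X := by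
  cases X <;> simp

@[simp] theorem size_swap (X : ETree A) : size (swap X) = size X := by
  induction X with
  | leafT | leafF => rfl
  | node l a r hl hr => simp [hl, hr]

theorem Mixed.three_le_size {X : ETree A} (hX : Mixed X) : 3 ≤ size X := by
  cases X with
  | leafT | leafF => simp [Mixed] at hX
  | node l a r => have := one_le_size l; have := one_le_size r; simp; omega

theorem size_le_replT (X Y : ETree A) : size X ≤ size (replT X Y) := by
  induction X with
  | leafT => exact one_le_size Y
  | leafF => rfl
  | node l a r hl hr => simp only [replT_node, size]; omega

theorem size_add_size_le_replT {X : ETree A} (hX : HasT X) (Y : ETree A) :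
    size X + size Y ≤ size (replT X Y) + 1 := by
  induction X with
  | leafT => simp; omega
  | leafF => simp at hX
  | node l a r hl hr =>
      have := size_le_replT l Y
      have := size_le_replT r Y
      simp only [HasT] at hX
      rcases hX with h | h
      · have := hl h; simp only [replT_node, size]; omega
      · have := hr h; simp only [replT_node, size]; omega

theorem size_add_size_le_replF {X : ETree A} (hX : HasF X) (Y : ETree A) :
    size X + size Y ≤ size (replF X Y) + 1 := by
  simpa [replF_eq_swap_replT] using size_add_size_le_replT ((hasT_swap X).2 hX) (swap Y)

theorem eq_leafT_of_replT_eq_self {X Y : ETree A} (hX : HasT X) (h : replT X Y = Y) :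
    X = leafT := by
  have hsize := size_add_size_le_replT hX Y
  rw [h] at hsize
  cases X with
  | leafT => rfl
  | leafF => simp at hX
  | node l a r => have := one_le_size l; have := one_le_size r; simp at hsize; omega

theorem IsFTree.replT_eq {X : ETree A} (hX : IsFTree X) (Y : ETree A) : replT X Y = X := by
  rw [replT, hX.repl_eq, replF_leafF_right]

theorem replT_left_cancel {X X' Y : ETree A} (hY : HasT Y) (h : replT X Y = replT X' Y) :
    X = X' := by
  have of_self : ∀ {X : ETree A}, replT X Y = Y → X = leafT := fun {X} hXY => by
    by_cases hX : HasT X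
    · exact eq_leafT_of_replT_eq_self hX hXY
    · rw [IsFTree.replT_eq hX] at hXY
      exact absurd (hXY ▸ hY) hX
  induction X generalizing X' with
  | leafT => exact (of_self h.symm).symm
  | leafF =>
      cases X' with
      | leafT => simp only [replT_leafF, replT_leafT] at h; subst h; simp at hY
      | leafF => rfl
      | node => simp at h
  | node l a r hl hr =>
      cases X' with
      | leafT => exact of_self h
      | leafF => simp at h
      | node l' a' r' =>
          simp only [replT_node, node.injEq] at h
          rw [hl h.1, h.2.1, hr h.2.2]

theorem replF_left_cancel {X X' Y : ETree A} (hY : HasF Y) (h : replF X Y = replF X' Y) :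
    X = X' := by
  rw [replF_eq_swap_replT, replF_eq_swap_replT] at h
  exact swap_injective (replT_left_cancel ((hasT_swap Y).2 hY) (swap_injective h))

theorem IsTTree.replT_left_cancel {S S' Y : ETree A} (hS : IsTTree S) (hS' : IsTTree S')
    (h : replT S Y = replT S' Y) : S = S' := by
  induction S generalizing S' with
  | leafT => exact (eq_leafT_of_replT_eq_self hS'.hasT h.symm).symm
  | leafF => simp [IsTTree] at hS
  | node l a r hl hr =>
      cases S' with
      | leafT => exact eq_leafT_of_replT_eq_self hS.hasT h
      | leafF => simp [IsTTree] at hS'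
      | node l' a' r' =>
          rw [isTTree_node] at hS hS'
          simp only [replT_node, node.injEq] at h
          rw [hl hS.1 hS'.1 h.1, h.2.1, hr hS.2 hS'.2 h.2.2]

theorem IsFTree.replF_left_cancel {U U' Y : ETree A} (hU : IsFTree U) (hU' : IsFTree U')
    (h : replF U Y = replF U' Y) : U = U' := by
  rw [hU.replF_eq_replT_swap, hU'.replF_eq_replT_swap] at h
  exact swap_injective (IsTTree.replT_left_cancel (isTTree_swap.2 hU) (isTTree_swap.2 hU') h)

def IsTTail (E X : ETree A) : Prop := ∃ S, IsTTree S ∧ X = replT S E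

theorem isTTail_replT {S : ETree A} (hS : IsTTree S) (E : ETree A) : IsTTail E (replT S E) :=
  ⟨S, hS, rfl⟩

theorem isTTail_replF {U : ETree A} (hU : IsFTree U) (E : ETree A) : IsTTail E (replF U E) :=
  ⟨swap U, isTTree_swap.2 hU, hU.replF_eq_replT_swap E⟩

theorem IsTTail.trans {E X Y : ETree A} (hEX : IsTTail E X) (hXY : IsTTail X Y) :
    IsTTail E Y := by
  obtain ⟨S, hS, rfl⟩ := hEX
  obtain ⟨S', hS', rfl⟩ := hXY
  exact ⟨replT S' S, isTTree_replT hS' hS, (replT_replT S' S E).symm⟩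

theorem isTTail_or_isTTail_of_replT_eq {S S' P Q : ETree A} (hS : IsTTree S) (hS' : IsTTree S')
    (h : replT S P = replT S' Q) : IsTTail P Q ∨ IsTTail Q P := by
  induction S generalizing S' with
  | leafT => exact Or.inr ⟨S', hS', h⟩
  | leafF => simp [IsTTree] at hS
  | node l a r hl _ =>
      cases S' with
      | leafT => exact Or.inl ⟨node l a r, hS, h.symm⟩
      | leafF => simp [IsTTree] at hS'
      | node l' a' r' =>
          simp only [replT_node, node.injEq] at h
          exact hl (isTTree_node.1 hS).1 (isTTree_node.1 hS').1 h.1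

theorem IsTTail.total {P Q X : ETree A} (hP : IsTTail P X) (hQ : IsTTail Q X) :
    IsTTail P Q ∨ IsTTail Q P := by
  obtain ⟨S, hS, rfl⟩ := hP
  obtain ⟨S', hS', h⟩ := hQ
  exact isTTail_or_isTTail_of_replT_eq hS hS' h

def NoTPrefix (X : ETree A) : Prop := ∀ E, IsTTail E X → E = X

theorem noTPrefix_leafT : NoTPrefix (leafT : ETree A) := by
  rintro E ⟨S, hS, h⟩
  cases S with
  | leafT => exact h.symm
  | leafF => simp [IsTTree] at hS
  | node => simp at h

theorem noTPrefix_leafF : NoTPrefix (leafF : ETree A) := by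
  rintro E ⟨S, hS, h⟩
  cases S with
  | leafT => exact h.symm
  | leafF => simp [IsTTree] at hS
  | node => simp at h

theorem NoTPrefix.eq_of_isTTail {P Q X : ETree A} (hP : NoTPrefix P) (hQ : NoTPrefix Q)
    (hPX : IsTTail P X) (hQX : IsTTail Q X) : P = Q := by
  rcases hPX.total hQX with h | h
  · exact hQ P h
  · exact (hP Q h).symm

theorem NoTPrefix.eq_of_comparable {P Q E : ETree A} (hP : NoTPrefix P) (hQ : NoTPrefix Q)
    (hPE : IsTTail P E ∨ IsTTail E P) (hQE : IsTTail Q E ∨ IsTTail E Q) : P = Q := by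
  rcases hPE with hPE | hEP <;> rcases hQE with hQE | hEQ
  · exact hP.eq_of_isTTail hQ hPE hQE
  · exact hQ P (hPE.trans hEQ)
  · exact (hP Q (hQE.trans hEP)).symm
  · rw [← hP E hEP, ← hQ E hEQ]

theorem eq_and_eq_of_replT_eq {S S' P P' : ETree A} (hS : IsTTree S) (hS' : IsTTree S')
    (hP : NoTPrefix P) (hP' : NoTPrefix P') (h : replT S P = replT S' P') : S = S' ∧ P = P' := by
  obtain rfl : P = P' := hP.eq_of_isTTail hP' (isTTail_replT hS P) (h ▸ isTTail_replT hS' P')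
  exact ⟨hS.replT_left_cancel hS' h, rfl⟩

theorem eq_and_eq_of_replF_eq {U U' Q Q' : ETree A} (hU : IsFTree U) (hU' : IsFTree U')
    (hQ : NoTPrefix Q) (hQ' : NoTPrefix Q') (h : replF U Q = replF U' Q') : U = U' ∧ Q = Q' := by
  obtain rfl : Q = Q' := hQ.eq_of_isTTail hQ' (isTTail_replF hU Q) (h ▸ isTTail_replF hU' Q')
  exact ⟨hU.replF_left_cancel hU' h, rfl⟩

theorem eq_of_replT_eq_replF {S U P Q : ETree A} (hS : IsTTree S) (hU : IsFTree U)
    (hP : NoTPrefix P) (hQ : NoTPrefix Q) (h : replT S P = replF U Q) : P = Q :=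
  hP.eq_of_isTTail hQ (isTTail_replT hS P) (h ▸ isTTail_replF hU Q)

inductive IsLitTree : ETree A → Prop
  | pos {S U : ETree A} (a : A) : IsTTree S → IsFTree U → IsLitTree (node S a U)
  | neg {S U : ETree A} (a : A) : IsTTree S → IsFTree U → IsLitTree (node U a S)

inductive IsStarTree : ETree A → Prop
  | lit {X : ETree A} : IsLitTree X → IsStarTree X
  | conj {X Y : ETree A} : IsStarTree X → IsStarTree Y → IsStarTree (replT X Y)
  | disj {X Y : ETree A} : IsStarTree X → IsStarTree Y → IsStarTree (replF X Y)

def StarOrT (X : ETree A) : Prop := X = leafT ∨ IsStarTree X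

def StarOrF (X : ETree A) : Prop := X = leafF ∨ IsStarTree X

theorem IsLitTree.mixed {L : ETree A} (hL : IsLitTree L) : Mixed L := by
  cases hL with
  | pos a hS hU => exact ⟨Or.inl hS.hasT, Or.inr hU.hasF⟩
  | neg a hS hU => exact ⟨Or.inr hS.hasT, Or.inl hU.hasF⟩

theorem IsLitTree.swap {L : ETree A} (hL : IsLitTree L) : IsLitTree (swap L) := by
  cases hL with
  | pos a hS hU => exact .neg a (isTTree_swap.2 hU) fun h => hS ((hasT_swap _).1 h)
  | neg a hS hU => exact .pos a (isTTree_swap.2 hU) fun h => hS ((hasT_swap _).1 h)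

theorem IsStarTree.mixed {X : ETree A} (hX : IsStarTree X) : Mixed X := by
  induction hX with
  | lit hL => exact hL.mixed
  | conj _ _ hX hY => exact mixed_replT hX.1 hY
  | disj _ _ hX hY => exact mixed_replF hX.2 hY

theorem IsStarTree.swap {X : ETree A} (hX : IsStarTree X) : IsStarTree (swap X) := by
  induction hX with
  | lit hL => exact .lit hL.swap
  | conj _ _ hX hY => rw [swap_replT]; exact .disj hX hY
  | disj _ _ hX hY => rw [swap_replF]; exact .conj hX hY

theorem IsStarTree.ne_leafT {X : ETree A} (hX : IsStarTree X) : X ≠ leafT := by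
  rintro rfl; simpa [Mixed] using hX.mixed

theorem IsStarTree.ne_leafF {X : ETree A} (hX : IsStarTree X) : X ≠ leafF := by
  rintro rfl; simpa [Mixed] using hX.mixed

theorem IsStarTree.size_lt_replT {X : ETree A} (hX : IsStarTree X) (Y : ETree A) :
    size Y < size (replT X Y) := by
  have := size_add_size_le_replT hX.mixed.1 Y
  have := hX.mixed.three_le_size
  omega

theorem IsStarTree.size_lt_replF {X : ETree A} (hX : IsStarTree X) (Y : ETree A) :
    size Y < size (replF X Y) := by
  have := size_add_size_le_replF hX.mixed.2 Y
  have := hX.mixed.three_le_size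
  omega

theorem IsStarTree.starOrT {X : ETree A} (hX : IsStarTree X) : StarOrT X := Or.inr hX

theorem StarOrT.replT {X Y : ETree A} (hX : StarOrT X) (hY : IsStarTree Y) :
    IsStarTree (ETree.replT X Y) := by
  rcases hX with rfl | hX
  · exact hY
  · exact .conj hX hY

theorem StarOrT.size_lt_replT {X Y : ETree A} (hX : StarOrT X) (hY : IsStarTree Y) :
    size X < size (ETree.replT X Y) := by
  have := hY.mixed.three_le_size
  rcases hX with rfl | hX
  · simp; omega
  · have := size_add_size_le_replT hX.mixed.1 Y
    omega

theorem StarOrF.swap {X : ETree A} (hX : StarOrF X) : StarOrT (ETree.swap X) := by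
  rcases hX with rfl | hX
  · exact Or.inl rfl
  · exact Or.inr hX.swap

theorem repl_node_of_isTTree_isFTree {S U : ETree A} (hS : IsTTree S) (hU : IsFTree U) (a : A)
    (P Q : ETree A) : (node S a U).repl P Q = node (replT S P) a (replF U Q) := by
  simp [hS.repl_eq, hU.repl_eq]

theorem repl_node_of_isFTree_isTTree {S U : ETree A} (hS : IsTTree S) (hU : IsFTree U) (a : A)
    (P Q : ETree A) : (node U a S).repl P Q = node (replF U Q) a (replT S P) := by
  simp [hS.repl_eq, hU.repl_eq]

theorem IsLitTree.size_add_lt {L : ETree A} (hL : IsLitTree L) (P Q : ETree A) :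
    size P + size Q < size (L.repl P Q) := by
  cases hL with
  | @pos S U a hS hU =>
      have := size_add_size_le_replT hS.hasT P
      have := size_add_size_le_replF hU.hasF Q
      have := one_le_size S; have := one_le_size U
      rw [repl_node_of_isTTree_isFTree hS hU]; simp; omega
  | @neg S U a hS hU =>
      have := size_add_size_le_replT hS.hasT P
      have := size_add_size_le_replF hU.hasF Q
      have := one_le_size S; have := one_le_size U
      rw [repl_node_of_isFTree_isTTree hS hU]; simp; omega

theorem IsLitTree.ne_replT {L X Y : ETree A} (hL : IsLitTree L) (hX : IsStarTree X)
    (hY : IsStarTree Y) : L ≠ replT X Y := by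
  intro h
  cases X with
  | leafT => exact hX.ne_leafT rfl
  | leafF => exact hX.ne_leafF rfl
  | node l b r =>
      have hlr : HasT l ∨ HasT r := hX.mixed.1
      cases hL with
      | pos a hS hU =>
          simp only [replT_node, node.injEq] at h
          rcases hlr with hl | hr
          · exact hS (h.1 ▸ (mixed_replT hl hY.mixed).2)
          · exact hU (h.2.2 ▸ (mixed_replT hr hY.mixed).1)
      | neg a hS hU =>
          simp only [replT_node, node.injEq] at h
          rcases hlr with hl | hr
          · exact hU (h.1 ▸ (mixed_replT hl hY.mixed).1)
          · exact hS (h.2.2 ▸ (mixed_replT hr hY.mixed).2)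

theorem IsLitTree.ne_replF {L X Y : ETree A} (hL : IsLitTree L) (hX : IsStarTree X)
    (hY : IsStarTree Y) : L ≠ replF X Y := by
  intro h
  apply hL.swap.ne_replT hX.swap hY.swap
  rw [h, swap_replF]

/-- `Continuations P Q`: after the head literal of a *-tree, evaluation continues with `P` if it
was true and with `Q` if it was false. -/
inductive Continuations : ETree A → ETree A → Prop
  | base : Continuations leafT leafF
  | conj {P Q Y : ETree A} : Continuations P Q → IsStarTree Y →
      Continuations (replT P Y) (replT Q Y)
  | disj {P Q Y : ETree A} : Continuations P Q → IsStarTree Y →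
      Continuations (replF P Y) (replF Q Y)

theorem Continuations.starOrT_left {P Q : ETree A} (h : Continuations P Q) : StarOrT P := by
  induction h with
  | base => exact Or.inl rfl
  | conj _ hY ih => exact Or.inr (ih.replT hY)
  | disj _ hY ih =>
      rcases ih with rfl | hP
      · exact Or.inl rfl
      · exact Or.inr (.disj hP hY)

theorem Continuations.starOrF_right {P Q : ETree A} (h : Continuations P Q) : StarOrF Q := by
  induction h with
  | base => exact Or.inl rfl
  | conj _ hY ih =>
      rcases ih with rfl | hQ
      · exact Or.inl rfl
      · exact Or.inr (.conj hQ hY)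
  | disj _ hY ih =>
      rcases ih with rfl | hQ
      · exact Or.inr hY
      · exact Or.inr (.disj hQ hY)

theorem Continuations.ne {P Q : ETree A} (h : Continuations P Q) : P ≠ Q := by
  induction h with
  | base => simp
  | conj _ hY ih => exact fun e => ih (replT_left_cancel hY.mixed.1 e)
  | disj _ hY ih => exact fun e => ih (replF_left_cancel hY.mixed.2 e)

theorem Continuations.swap {P Q : ETree A} (h : Continuations P Q) :
    Continuations (swap Q) (swap P) := by
  induction h with
  | base => exact .base
  | conj _ hY ih => rw [swap_replT, swap_replT]; exact .disj ih hY.swap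
  | disj _ hY ih => rw [swap_replF, swap_replF]; exact .conj ih hY.swap

theorem Continuations.replT_of_starOrT {P Q M : ETree A} (h : Continuations P Q)
    (hM : StarOrT M) : Continuations (replT P M) (replT Q M) := by
  rcases hM with rfl | hM
  · simpa using h
  · exact .conj h hM

theorem IsStarTree.exists_head {X : ETree A} (hX : IsStarTree X) :
    ∃ L P Q, IsLitTree L ∧ Continuations P Q ∧ X = L.repl P Q := by
  induction hX with
  | lit hL => exact ⟨_, _, _, hL, .base, (repl_leafT_leafF _).symm⟩
  | conj _ hY ih =>
      obtain ⟨L, P, Q, hL, hPQ, rfl⟩ := ih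
      exact ⟨L, _, _, hL, .conj hPQ hY, replT_repl L P Q _⟩
  | disj _ hY ih =>
      obtain ⟨L, P, Q, hL, hPQ, rfl⟩ := ih
      exact ⟨L, _, _, hL, .disj hPQ hY, replF_repl L P Q _⟩

theorem IsLitTree.noTPrefix_repl {L P Q : ETree A} (hL : IsLitTree L) (hPQ : Continuations P Q)
    (hP : NoTPrefix P) (hQ : NoTPrefix Q) : NoTPrefix (L.repl P Q) := by
  rintro E ⟨S, hS, h⟩
  cases S with
  | leafT => exact h.symm
  | leafF => simp [IsTTree] at hS
  | node l b r =>
      exfalso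
      apply hPQ.ne
      rw [isTTree_node] at hS
      -- both children have `E` as a T-tail, but continue with `P` and `Q` respectively
      cases hL with
      | pos a hS₀ hU₀ =>
          rw [repl_node_of_isTTree_isFTree hS₀ hU₀, replT_node, node.injEq] at h
          exact hP.eq_of_comparable hQ
            ((isTTail_replT hS₀ P).total (h.1 ▸ isTTail_replT hS.1 E))
            ((isTTail_replF hU₀ Q).total (h.2.2 ▸ isTTail_replT hS.2 E))
      | neg a hS₀ hU₀ =>
          rw [repl_node_of_isFTree_isTTree hS₀ hU₀, replT_node, node.injEq] at h
          exact hP.eq_of_comparable hQ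
            ((isTTail_replT hS₀ P).total (h.2.2 ▸ isTTail_replT hS.2 E))
            ((isTTail_replF hU₀ Q).total (h.1 ▸ isTTail_replT hS.1 E))

theorem IsLitTree.repl_inj {L L' P Q P' Q' : ETree A} (hL : IsLitTree L) (hL' : IsLitTree L')
    (hP : NoTPrefix P) (hQ : NoTPrefix Q) (hP' : NoTPrefix P') (hQ' : NoTPrefix Q')
    (hQP : ¬ Continuations Q P) (hPQ' : Continuations P' Q')
    (h : L.repl P Q = L'.repl P' Q') : L = L' ∧ P = P' ∧ Q = Q' := by
  cases hL with
  | pos a hS hU =>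
      cases hL' with
      | pos a' hS' hU' =>
          rw [repl_node_of_isTTree_isFTree hS hU, repl_node_of_isTTree_isFTree hS' hU',
            node.injEq] at h
          obtain ⟨rfl, rfl⟩ := eq_and_eq_of_replT_eq hS hS' hP hP' h.1
          obtain ⟨rfl, rfl⟩ := eq_and_eq_of_replF_eq hU hU' hQ hQ' h.2.2
          rw [h.2.1]; exact ⟨rfl, rfl, rfl⟩
      | neg a' hS' hU' =>
          rw [repl_node_of_isTTree_isFTree hS hU, repl_node_of_isFTree_isTTree hS' hU',
            node.injEq] at h
          obtain rfl := eq_of_replT_eq_replF hS hU' hP hQ' h.1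
          obtain rfl := eq_of_replT_eq_replF hS' hU hP' hQ h.2.2.symm
          exact absurd hPQ' hQP
  | neg a hS hU =>
      cases hL' with
      | pos a' hS' hU' =>
          rw [repl_node_of_isFTree_isTTree hS hU, repl_node_of_isTTree_isFTree hS' hU',
            node.injEq] at h
          obtain rfl := eq_of_replT_eq_replF hS' hU hP' hQ h.1.symm
          obtain rfl := eq_of_replT_eq_replF hS hU' hP hQ' h.2.2
          exact absurd hPQ' hQP
      | neg a' hS' hU' =>
          rw [repl_node_of_isFTree_isTTree hS hU, repl_node_of_isFTree_isTTree hS' hU',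
            node.injEq] at h
          obtain ⟨rfl, rfl⟩ := eq_and_eq_of_replT_eq hS hS' hP hP' h.2.2
          obtain ⟨rfl, rfl⟩ := eq_and_eq_of_replF_eq hU hU' hQ hQ' h.1
          rw [h.2.1]; exact ⟨rfl, rfl, rfl⟩

def AndOrExclusive (X : ETree A) : Prop :=
  ∀ ⦃P Y Q Z : ETree A⦄, IsStarTree P → IsStarTree Y → IsStarTree Q → IsStarTree Z →
    X = replT P Y → X ≠ replF Q Z

-- `M = leafT` is the case of two equal splittings.
def AndSplitsAssoc (X : ETree A) : Prop :=
  ∀ ⦃P Y Q Z : ETree A⦄, StarOrT P → IsStarTree Y → StarOrT Q → IsStarTree Z →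
    X = replT P Y → X = replT Q Z →
    (∃ M, StarOrT M ∧ Q = replT P M ∧ Y = replT M Z) ∨
      (∃ M, StarOrT M ∧ P = replT Q M ∧ Z = replT M Y)

structure StarFacts (X : ETree A) : Prop where
  noTPrefix : NoTPrefix X
  andOrExclusive : AndOrExclusive X
  andSplitsAssoc : AndSplitsAssoc X

def StarFactsBelow (A : Type) (n : ℕ) : Prop :=
  ∀ X : ETree A, IsStarTree X → size X < n → StarFacts X

theorem StarOrT.noTPrefix {n : ℕ} {X : ETree A} (hX : StarOrT X) (h : StarFactsBelow A n)
    (hlt : size X < n) : NoTPrefix X := by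
  rcases hX with rfl | hX
  · exact noTPrefix_leafT
  · exact (h X hX hlt).noTPrefix

theorem StarOrF.noTPrefix {n : ℕ} {X : ETree A} (hX : StarOrF X) (h : StarFactsBelow A n)
    (hlt : size X < n) : NoTPrefix X := by
  rcases hX with rfl | hX
  · exact noTPrefix_leafF
  · exact (h X hX hlt).noTPrefix

theorem Continuations.not_symm_of_conj {n : ℕ} (hn : StarFactsBelow A n)
    {P Q P₁ Q₁ Y : ETree A} (hsize : size P + size Q ≤ n)
    (ih : ∀ P' Q' : ETree A, size P' + size Q' < size P + size Q →
      Continuations P' Q' → ¬ Continuations Q' P')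
    (h₁ : Continuations P₁ Q₁) (hY : IsStarTree Y) (hP : P = replT P₁ Y)
    (hQ : Q = replT Q₁ Y) : ¬ Continuations Q P := by
  intro h
  have hPstar : IsStarTree P := hP ▸ h₁.starOrT_left.replT hY
  have hQ₁ : IsStarTree Q₁ := by
    rcases h₁.starOrF_right with rfl | hQ₁
    · rcases h.starOrT_left with hQT | hQstar
      · simp [hQ] at hQT
      · exact absurd (by simp [hQ]) hQstar.ne_leafF
    · exact hQ₁
  have hQstar : IsStarTree Q := hQ ▸ .conj hQ₁ hY
  have hQfacts := hn Q hQstar (by have := one_le_size P; omega)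
  have hP₁ : size P₁ < size P := hP ▸ h₁.starOrT_left.size_lt_replT hY
  have hQ₁' : size Q₁ < size Q := hQ ▸ hQ₁.starOrT.size_lt_replT hY
  cases h with
  | base => exact hQstar.ne_leafT rfl
  | disj h₂ hY' =>
      rcases h₂.starOrT_left with rfl | hQ₂
      · exact hQstar.ne_leafT (by simp)
      · exact hQfacts.andOrExclusive hQ₁ hY hQ₂ hY' hQ rfl
  | @conj Q₂ P₂ Y' h₂ hY' =>
      have hP₂ : IsStarTree P₂ := by
        rcases h₂.starOrF_right with rfl | hP₂
        · exact absurd (by simp) hPstar.ne_leafF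
        · exact hP₂
      rcases hQfacts.andSplitsAssoc h₂.starOrT_left hY' hQ₁.starOrT hY rfl hQ with
        ⟨M, hM, rfl, rfl⟩ | ⟨M, hM, rfl, rfl⟩
      · obtain rfl : replT P₂ M = P₁ :=
          replT_left_cancel hY.mixed.1 (by rw [replT_replT, hP])
        exact ih _ _ (by omega) h₁ (h₂.replT_of_starOrT hM)
      · obtain rfl : replT P₁ M = P₂ :=
          replT_left_cancel hY'.mixed.1 (by rw [replT_replT, ← hP])
        have := hP₂.starOrT.size_lt_replT hY'
        have := h₂.starOrT_left.size_lt_replT hY'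
        exact ih _ _ (by omega) (h₁.replT_of_starOrT hM) h₂

theorem Continuations.not_symm {n : ℕ} (hn : StarFactsBelow A n) {P Q : ETree A}
    (hsize : size P + size Q ≤ n) (h : Continuations P Q) : ¬ Continuations Q P := by
  induction hm : size P + size Q using Nat.strong_induction_on generalizing P Q with
  | _ m ih =>
  have ih' : ∀ P' Q' : ETree A, size P' + size Q' < size P + size Q →
      Continuations P' Q' → ¬ Continuations Q' P' :=
    fun P' Q' hlt hPQ => ih _ (hm ▸ hlt) (by omega) hPQ rfl
  cases h with
  | base =>
      intro h'
      rcases h'.starOrT_left with h | h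
      · simp at h
      · exact h.ne_leafF rfl
  | conj h₁ hY => exact not_symm_of_conj hn hsize ih' h₁ hY rfl rfl
  | disj h₁ hY =>
      intro h'
      refine not_symm_of_conj hn (by simpa [add_comm] using hsize) ?_ h₁.swap hY.swap
        (swap_replF _ _) (swap_replF _ _) h'.swap
      intro P' Q' hlt
      exact ih' P' Q' (by simpa [add_comm] using hlt)

theorem StarFactsBelow.repl_inj {L L' P Q P' Q' : ETree A}
    (hn : StarFactsBelow A (size (L.repl P Q))) (hL : IsLitTree L) (hL' : IsLitTree L')
    (hPQ : Continuations P Q) (hPQ' : Continuations P' Q')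
    (h : L.repl P Q = L'.repl P' Q') : L = L' ∧ P = P' ∧ Q = Q' := by
  have hlt := hL.size_add_lt P Q
  have hlt' := hL'.size_add_lt P' Q'
  rw [← h] at hlt'
  exact hL.repl_inj hL' (hPQ.starOrT_left.noTPrefix hn (by omega))
    (hPQ.starOrF_right.noTPrefix hn (by omega)) (hPQ'.starOrT_left.noTPrefix hn (by omega))
    (hPQ'.starOrF_right.noTPrefix hn (by omega)) (hPQ.not_symm hn hlt.le) hPQ' h

theorem eq_leafT_of_replT_eq_replF {P Q Y Z : ETree A} (hP : StarOrT P) (hQ : StarOrT Q)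
    (hY : IsStarTree Y) (hZ : IsStarTree Z)
    (hPY : IsStarTree P → AndOrExclusive (replT P Y)) (h : replT P Y = replF Q Z) :
    P = leafT ∧ IsStarTree Q := by
  rcases hQ with rfl | hQ
  · exact absurd h (hP.replT hY).ne_leafT
  rcases hP with rfl | hP
  · exact ⟨rfl, hQ⟩
  · exact absurd h (hPY hP hP hY hQ hZ rfl)

theorem StarFactsBelow.andOrExclusive {X : ETree A} (hn : StarFactsBelow A (size X)) :
    AndOrExclusive X := by
  intro P Y Q Z hP hY hQ hZ hXP hXQ
  obtain ⟨L, P₁, P₂, hL, hP₁₂, rfl⟩ := hP.exists_head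
  obtain ⟨L', Q₁, Q₂, hL', hQ₁₂, rfl⟩ := hQ.exists_head
  rw [replT_repl] at hXP
  rw [replF_repl] at hXQ
  subst hXP
  have hlt := hL.size_add_lt (replT P₁ Y) (replT P₂ Y)
  obtain ⟨-, e₁, e₂⟩ := hn.repl_inj hL hL' (hP₁₂.conj hY) (hQ₁₂.disj hZ) hXQ
  have hlt₂ : size (replT (swap Q₂) (swap Z)) < size (L.repl (replT P₁ Y) (replT P₂ Y)) := by
    rw [← swap_replF, size_swap, ← e₂]; omega
  obtain ⟨rfl, hQ₁⟩ := eq_leafT_of_replT_eq_replF hP₁₂.starOrT_left hQ₁₂.starOrT_left hY hZ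
    (fun hP₁ => (hn _ (.conj hP₁ hY) (by omega)).andOrExclusive) e₁
  have e₂' : replT (swap Q₂) (swap Z) = replF (swap P₂) (swap Y) := by
    rw [← swap_replF, ← swap_replT, e₂]
  obtain ⟨hQ₂, hP₂⟩ := eq_leafT_of_replT_eq_replF hQ₁₂.starOrF_right.swap
    hP₁₂.starOrF_right.swap hZ.swap hY.swap
    (fun hQ₂ => (hn _ (.conj hQ₂ hZ.swap) hlt₂).andOrExclusive) e₂'
  rw [hQ₂, replT_leafT, ← swap_replT] at e₂'
  have hYZ : Y = replF Q₁ Z := e₁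
  have hZY : Z = replT P₂ Y := swap_injective e₂'
  have hZ_lt : size Z < size Y := hYZ ▸ hQ₁.size_lt_replF Z
  have hY_lt : size Y < size Z := hZY ▸ (swap_swap P₂ ▸ hP₂.swap).size_lt_replT Y
  omega

theorem repl_eq_replT_of_replT_eq {L P₁ P₂ Q₂ M Z : ETree A} (hZ : HasT Z)
    (h : replT P₂ (replT M Z) = replT Q₂ Z) :
    L.repl (replT P₁ M) Q₂ = replT (L.repl P₁ P₂) M := by
  obtain rfl : replT P₂ M = Q₂ := replT_left_cancel hZ (by rw [replT_replT, h])
  rw [replT_repl]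

theorem StarFactsBelow.andSplitsAssoc {X : ETree A} (hn : StarFactsBelow A (size X)) :
    AndSplitsAssoc X := by
  intro P Y Q Z hP hY hQ hZ hXP hXQ
  rcases hP with rfl | hP
  · exact Or.inl ⟨Q, hQ, by simp, by rw [← replT_leafT Y, ← hXP, hXQ]⟩
  rcases hQ with rfl | hQ
  · exact Or.inr ⟨P, hP.starOrT, by simp, by rw [← replT_leafT Z, ← hXQ, hXP]⟩
  obtain ⟨L, P₁, P₂, hL, hP₁₂, rfl⟩ := hP.exists_head
  obtain ⟨L', Q₁, Q₂, hL', hQ₁₂, rfl⟩ := hQ.exists_head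
  rw [replT_repl] at hXP hXQ
  subst hXP
  have hlt := hL.size_add_lt (replT P₁ Y) (replT P₂ Y)
  obtain ⟨rfl, e₁, e₂⟩ := hn.repl_inj hL hL' (hP₁₂.conj hY) (hQ₁₂.conj hZ) hXQ
  rcases (hn _ (hP₁₂.starOrT_left.replT hY) (by omega)).andSplitsAssoc hP₁₂.starOrT_left hY
    hQ₁₂.starOrT_left hZ rfl e₁ with ⟨M, hM, rfl, rfl⟩ | ⟨M, hM, rfl, rfl⟩
  · exact Or.inl ⟨M, hM, repl_eq_replT_of_replT_eq hZ.mixed.1 e₂, rfl⟩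
  · exact Or.inr ⟨M, hM, repl_eq_replT_of_replT_eq hY.mixed.1 e₂.symm, rfl⟩

theorem IsStarTree.starFacts {X : ETree A} (hX : IsStarTree X) : StarFacts X := by
  induction hs : size X using Nat.strong_induction_on generalizing X with
  | _ n ih =>
  have hn : StarFactsBelow A (size X) := fun W hW hlt => ih _ (hs ▸ hlt) hW rfl
  refine ⟨?_, hn.andOrExclusive, hn.andSplitsAssoc⟩
  obtain ⟨L, P, Q, hL, hPQ, rfl⟩ := hX.exists_head
  have := hL.size_add_lt P Q
  exact hL.noTPrefix_repl hPQ (hPQ.starOrT_left.noTPrefix hn (by omega))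
    (hPQ.starOrF_right.noTPrefix hn (by omega))

end ETree

section Terms

variable {A : Type}

open ETree

theorem se_neg (P : STerm A) : se (.neg P) = swap (se P) := rfl

theorem se_and (P Q : STerm A) : se (.and P Q) = replT (se P) (se Q) := rfl

theorem se_or (P Q : STerm A) : se (.or P Q) = replF (se P) (se Q) := rfl

theorem EqFSCL.se_eq {P Q : STerm A} (h : EqFSCL P Q) : se P = se Q := by
  induction h with
  | refl => rfl
  | symm _ ih => exact ih.symm
  | trans _ _ ih₁ ih₂ => exact ih₁.trans ih₂
  | neg_congr _ ih => rw [se_neg, se_neg, ih]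
  | and_congr _ _ ih₁ ih₂ => rw [se_and, se_and, ih₁, ih₂]
  | or_congr _ _ ih₁ ih₂ => rw [se_or, se_or, ih₁, ih₂]
  | _ => simp [se, repl_repl_s2]

local infixl:65 " ⋀ " => STerm.and
local infixl:60 " ⋁ " => STerm.or
local prefix:100 "∼" => STerm.neg
local infix:45 " ≐ " => EqFSCL

instance : Trans (@EqFSCL A) (@EqFSCL A) (@EqFSCL A) := ⟨EqFSCL.trans⟩

namespace EqFSCL

theorem neg_tt : ∼.tt ≐ (.ff : STerm A) := F1.symm

theorem neg_ff : ∼.ff ≐ (.tt : STerm A) := (neg_congr F1).trans (F3 .tt)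

theorem neg_and (x y : STerm A) : ∼(x ⋀ y) ≐ ∼x ⋁ ∼y :=
  ((F2 (∼x) (∼y)).trans (neg_congr (and_congr (F3 x) (F3 y)))).symm

theorem neg_or (x y : STerm A) : ∼(x ⋁ y) ≐ ∼x ⋀ ∼y :=
  (neg_congr (F2 x y)).trans (F3 _)

theorem and_eq_neg_or (x y : STerm A) : x ⋀ y ≐ ∼(∼x ⋁ ∼y) :=
  ((neg_or (∼x) (∼y)).trans (and_congr (F3 x) (F3 y))).symm

theorem tt_or (x : STerm A) : .tt ⋁ x ≐ .tt :=
  calc .tt ⋁ x ≐ ∼(∼.tt ⋀ ∼x) := F2 _ _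
    _ ≐ ∼(.ff ⋀ ∼x) := neg_congr (and_congr neg_tt (refl _))
    _ ≐ ∼.ff := neg_congr (F6 _)
    _ ≐ .tt := neg_ff

theorem ff_or (x : STerm A) : .ff ⋁ x ≐ x :=
  calc .ff ⋁ x ≐ ∼(∼.ff ⋀ ∼x) := F2 _ _
    _ ≐ ∼(.tt ⋀ ∼x) := neg_congr (and_congr neg_ff (refl _))
    _ ≐ ∼∼x := neg_congr (F4 _)
    _ ≐ x := F3 x

theorem and_tt (x : STerm A) : x ⋀ .tt ≐ x :=
  calc x ⋀ .tt ≐ ∼(∼x ⋁ ∼.tt) := and_eq_neg_or _ _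
    _ ≐ ∼(∼x ⋁ .ff) := neg_congr (or_congr (refl _) neg_tt)
    _ ≐ ∼∼x := neg_congr (F5 _)
    _ ≐ x := F3 x

theorem or_assoc (x y z : STerm A) : (x ⋁ y) ⋁ z ≐ x ⋁ (y ⋁ z) :=
  calc (x ⋁ y) ⋁ z ≐ ∼(∼(x ⋁ y) ⋀ ∼z) := F2 _ _
    _ ≐ ∼((∼x ⋀ ∼y) ⋀ ∼z) := neg_congr (and_congr (neg_or _ _) (refl _))
    _ ≐ ∼(∼x ⋀ (∼y ⋀ ∼z)) := neg_congr (F7 _ _ _)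
    _ ≐ ∼(∼x ⋀ ∼(y ⋁ z)) := neg_congr (and_congr (refl _) (neg_or _ _).symm)
    _ ≐ x ⋁ (y ⋁ z) := (F2 _ _).symm

theorem and_ff_and (x y : STerm A) : (x ⋀ .ff) ⋀ y ≐ x ⋀ .ff :=
  (F7 _ _ _).trans (and_congr (refl _) (F6 _))

theorem neg_and_ff (x : STerm A) : ∼(x ⋀ .ff) ≐ x ⋁ .tt :=
  calc ∼(x ⋀ .ff) ≐ ∼(∼x ⋀ .ff) := neg_congr (F8 x).symm
    _ ≐ ∼(∼x ⋀ ∼.tt) := neg_congr (and_congr (refl _) F1)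
    _ ≐ x ⋁ .tt := (F2 _ _).symm

theorem neg_or_tt (x : STerm A) : ∼(x ⋁ .tt) ≐ x ⋀ .ff :=
  calc ∼(x ⋁ .tt) ≐ ∼x ⋀ ∼.tt := neg_or _ _
    _ ≐ ∼x ⋀ .ff := and_congr (refl _) neg_tt
    _ ≐ x ⋀ .ff := F8 x

theorem neg_or_tt_eq_or_tt (x : STerm A) : ∼x ⋁ .tt ≐ x ⋁ .tt :=
  calc ∼x ⋁ .tt ≐ ∼(∼x ⋀ .ff) := (neg_and_ff _).symm
    _ ≐ ∼(x ⋀ .ff) := neg_congr (F8 x)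
    _ ≐ x ⋁ .tt := neg_and_ff x

theorem or_tt_or (x y : STerm A) : (x ⋁ .tt) ⋁ y ≐ x ⋁ .tt :=
  (or_assoc _ _ _).trans (or_congr (refl _) (tt_or y))

theorem or_and_or_tt (x y z : STerm A) :
    (x ⋁ y) ⋀ (z ⋁ .tt) ≐ (x ⋀ (z ⋁ .tt)) ⋁ (y ⋀ (z ⋁ .tt)) :=
  calc (x ⋁ y) ⋀ (z ⋁ .tt)
      ≐ ∼(∼(x ⋁ y) ⋁ ∼(z ⋁ .tt)) := and_eq_neg_or _ _
    _ ≐ ∼((∼x ⋀ ∼y) ⋁ (z ⋀ .ff)) := neg_congr (or_congr (neg_or _ _) (neg_or_tt z))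
    _ ≐ ∼((∼x ⋁ (z ⋀ .ff)) ⋀ (∼y ⋁ (z ⋀ .ff))) := neg_congr (F10 _ _ _)
    _ ≐ ∼(∼x ⋁ (z ⋀ .ff)) ⋁ ∼(∼y ⋁ (z ⋀ .ff)) := neg_and _ _
    _ ≐ (∼∼x ⋀ ∼(z ⋀ .ff)) ⋁ (∼∼y ⋀ ∼(z ⋀ .ff)) := or_congr (neg_or _ _) (neg_or _ _)
    _ ≐ (x ⋀ (z ⋁ .tt)) ⋁ (y ⋀ (z ⋁ .tt)) :=
        or_congr (and_congr (F3 x) (neg_and_ff z)) (and_congr (F3 y) (neg_and_ff z))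

theorem or_and_ff (x y : STerm A) : (x ⋁ y) ⋀ .ff ≐ (∼x ⋀ y) ⋀ .ff :=
  calc (x ⋁ y) ⋀ .ff ≐ ∼(∼x ⋀ ∼y) ⋀ .ff := and_congr (F2 _ _) (refl _)
    _ ≐ (∼x ⋀ ∼y) ⋀ .ff := F8 _
    _ ≐ ∼x ⋀ (∼y ⋀ .ff) := F7 _ _ _
    _ ≐ ∼x ⋀ (y ⋀ .ff) := and_congr (refl _) (F8 y)
    _ ≐ (∼x ⋀ y) ⋀ .ff := (F7 _ _ _).symm

theorem or_and_ff_absorb (x y : STerm A) : (x ⋁ y) ⋀ .ff ≐ (x ⋁ (y ⋀ .ff)) ⋀ .ff :=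
  calc (x ⋁ y) ⋀ .ff ≐ (∼x ⋀ y) ⋀ .ff := or_and_ff _ _
    _ ≐ ∼x ⋀ (y ⋀ .ff) := F7 _ _ _
    _ ≐ ∼x ⋀ ((y ⋀ .ff) ⋀ .ff) := and_congr (refl _) (and_ff_and y .ff).symm
    _ ≐ (∼x ⋀ (y ⋀ .ff)) ⋀ .ff := (F7 _ _ _).symm
    _ ≐ (x ⋁ (y ⋀ .ff)) ⋀ .ff := (or_and_ff x (y ⋀ .ff)).symm

theorem neg_or_and_and_ff (x y z : STerm A) :
    (∼x ⋁ y) ⋀ (z ⋀ .ff) ≐ (x ⋁ (z ⋀ .ff)) ⋀ (y ⋀ (z ⋀ .ff)) :=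
  calc (∼x ⋁ y) ⋀ (z ⋀ .ff)
      ≐ ∼(x ⋀ ∼y) ⋀ (z ⋀ .ff) :=
        and_congr ((F2 _ _).trans (neg_congr (and_congr (F3 x) (refl _)))) (refl _)
    _ ≐ (∼(x ⋀ ∼y) ⋀ z) ⋀ .ff := (F7 _ _ _).symm
    _ ≐ ((x ⋀ ∼y) ⋁ z) ⋀ .ff := (or_and_ff _ _).symm
    _ ≐ ((x ⋀ ∼y) ⋁ (z ⋀ .ff)) ⋀ .ff := or_and_ff_absorb _ _
    _ ≐ ((x ⋁ (z ⋀ .ff)) ⋀ (∼y ⋁ (z ⋀ .ff))) ⋀ .ff := and_congr (F10 _ _ _) (refl _)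
    _ ≐ (x ⋁ (z ⋀ .ff)) ⋀ ((∼y ⋁ (z ⋀ .ff)) ⋀ .ff) := F7 _ _ _
    _ ≐ (x ⋁ (z ⋀ .ff)) ⋀ ((y ⋀ (z ⋀ .ff)) ⋀ .ff) :=
        and_congr (refl _) ((or_and_ff _ _).trans (and_congr (and_congr (F3 y) (refl _)) (refl _)))
    _ ≐ (x ⋁ (z ⋀ .ff)) ⋀ (y ⋀ ((z ⋀ .ff) ⋀ .ff)) := and_congr (refl _) (F7 _ _ _)
    _ ≐ (x ⋁ (z ⋀ .ff)) ⋀ (y ⋀ (z ⋀ .ff)) :=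
        and_congr (refl _) (and_congr (refl _) (and_ff_and z .ff))

theorem or_and_and_ff_absorb (x y z : STerm A) :
    (x ⋁ y) ⋀ (z ⋀ .ff) ≐ (x ⋁ (y ⋀ (z ⋀ .ff))) ⋀ (z ⋀ .ff) := by
  have h : ∀ y, (x ⋁ y) ⋀ (z ⋀ .ff) ≐ (∼x ⋁ (z ⋀ .ff)) ⋀ (y ⋀ (z ⋀ .ff)) := fun y =>
    (and_congr (or_congr (F3 x).symm (refl _)) (refl _)).trans (neg_or_and_and_ff (∼x) y z)
  calc (x ⋁ y) ⋀ (z ⋀ .ff) ≐ (∼x ⋁ (z ⋀ .ff)) ⋀ (y ⋀ (z ⋀ .ff)) := h y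
    _ ≐ (∼x ⋁ (z ⋀ .ff)) ⋀ ((y ⋀ (z ⋀ .ff)) ⋀ (z ⋀ .ff)) :=
        and_congr (refl _) ((F7 _ _ _).trans (and_congr (refl _) (and_ff_and z _))).symm
    _ ≐ (x ⋁ (y ⋀ (z ⋀ .ff))) ⋀ (z ⋀ .ff) := (h _).symm

theorem or_and_ff_and_or_tt (x y z : STerm A) :
    (x ⋁ (y ⋀ .ff)) ⋀ (z ⋁ .tt) ≐ (x ⋀ (z ⋁ .tt)) ⋁ (y ⋀ .ff) :=
  calc (x ⋁ (y ⋀ .ff)) ⋀ (z ⋁ .tt)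
      ≐ (x ⋁ (y ⋀ .ff)) ⋀ ((z ⋁ .tt) ⋁ (y ⋀ .ff)) := and_congr (refl _) (or_tt_or z _).symm
    _ ≐ (x ⋀ (z ⋁ .tt)) ⋁ (y ⋀ .ff) := (F10 _ _ _).symm

end EqFSCL

namespace STerm

def dual : STerm A → STerm A
  | atom a => atom a
  | tt => ff
  | ff => tt
  | neg P => neg (dual P)
  | and P Q => or (dual P) (dual Q)
  | or P Q => and (dual P) (dual Q)

@[simp] theorem dual_dual (P : STerm A) : dual (dual P) = P := by
  induction P <;> simp [dual, *]

end STerm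

open EqFSCL in
theorem EqFSCL.dual {P Q : STerm A} (h : P ≐ Q) : P.dual ≐ Q.dual := by
  induction h with
  | refl => exact refl _
  | symm _ ih => exact ih.symm
  | trans _ _ ih₁ ih₂ => exact ih₁.trans ih₂
  | neg_congr _ ih => exact neg_congr ih
  | and_congr _ _ ih₁ ih₂ => exact or_congr ih₁ ih₂
  | or_congr _ _ ih₁ ih₂ => exact and_congr ih₁ ih₂
  | F1 => exact neg_ff.symm
  | F2 => exact and_eq_neg_or _ _
  | F3 => exact F3 _
  | F4 => exact ff_or _
  | F5 => exact and_tt _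
  | F6 => exact tt_or _
  | F7 => exact or_assoc _ _ _
  | F8 => exact neg_or_tt_eq_or_tt _
  | F9 => exact (F9 _ _).symm
  | F10 => exact or_and_or_tt _ _ _

namespace STerm

open EqFSCL

inductive IsTTerm : STerm A → Prop
  | tt : IsTTerm .tt
  | cons (a : A) {P Q : STerm A} : IsTTerm P → IsTTerm Q → IsTTerm ((atom a ⋀ P) ⋁ Q)

inductive IsFTerm : STerm A → Prop
  | ff : IsFTerm .ff
  | cons (a : A) {P Q : STerm A} : IsFTerm P → IsFTerm Q → IsFTerm ((atom a ⋁ P) ⋀ Q)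

inductive IsLiteral : STerm A → Prop
  | pos (a : A) {P G : STerm A} : IsTTerm P → IsFTerm G → IsLiteral ((atom a ⋀ P) ⋁ G)
  | neg (a : A) {P G : STerm A} : IsTTerm P → IsFTerm G → IsLiteral ((∼atom a ⋀ P) ⋁ G)

inductive IsStarTerm : STerm A → Prop
  | lit {P : STerm A} : IsLiteral P → IsStarTerm P
  | and {P Q : STerm A} : IsStarTerm P → IsStarTerm Q → IsStarTerm (P ⋀ Q)
  | or {P Q : STerm A} : IsStarTerm P → IsStarTerm Q → IsStarTerm (P ⋁ Q)

inductive IsNormalForm : STerm A → Prop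
  | tTerm {P : STerm A} : IsTTerm P → IsNormalForm P
  | fTerm {P : STerm A} : IsFTerm P → IsNormalForm P
  | mix {P Q : STerm A} : IsTTerm P → IsStarTerm Q → IsNormalForm (P ⋀ Q)

theorem IsTTerm.dual {P : STerm A} (h : IsTTerm P) : IsFTerm P.dual := by
  induction h with
  | tt => exact .ff
  | cons a _ _ ih₁ ih₂ => exact .cons a ih₁ ih₂

theorem IsFTerm.dual {P : STerm A} (h : IsFTerm P) : IsTTerm P.dual := by
  induction h with
  | ff => exact .tt
  | cons a _ _ ih₁ ih₂ => exact .cons a ih₁ ih₂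

theorem IsTTerm.exists_eq_or_tt {P : STerm A} (h : IsTTerm P) : ∃ p, P ≐ p ⋁ .tt := by
  induction h with
  | tt => exact ⟨.tt, (tt_or .tt).symm⟩
  | cons a _ _ _ ih =>
      obtain ⟨q, hq⟩ := ih
      exact ⟨_ ⋁ q, (or_congr (refl _) hq).trans (or_assoc _ _ _).symm⟩

theorem IsFTerm.exists_eq_and_ff {P : STerm A} (h : IsFTerm P) : ∃ p, P ≐ p ⋀ .ff := by
  induction h with
  | ff => exact ⟨.tt, (F4 .ff).symm⟩
  | cons a _ _ _ ih =>
      obtain ⟨q, hq⟩ := ih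
      exact ⟨_ ⋀ q, (and_congr (refl _) hq).trans (F7 _ _ _).symm⟩

theorem IsFTerm.and_absorb {G : STerm A} (hG : IsFTerm G) (y : STerm A) : G ⋀ y ≐ G := by
  obtain ⟨g, hg⟩ := hG.exists_eq_and_ff
  calc G ⋀ y ≐ (g ⋀ .ff) ⋀ y := and_congr hg (refl _)
    _ ≐ g ⋀ .ff := and_ff_and _ _
    _ ≐ G := hg.symm

theorem IsFTerm.or_and_absorb {G : STerm A} (hG : IsFTerm G) (x y : STerm A) :
    (x ⋁ y) ⋀ G ≐ (x ⋁ (y ⋀ G)) ⋀ G := by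
  obtain ⟨g, hg⟩ := hG.exists_eq_and_ff
  calc (x ⋁ y) ⋀ G ≐ (x ⋁ y) ⋀ (g ⋀ .ff) := and_congr (refl _) hg
    _ ≐ (x ⋁ (y ⋀ (g ⋀ .ff))) ⋀ (g ⋀ .ff) := or_and_and_ff_absorb _ _ _
    _ ≐ (x ⋁ (y ⋀ G)) ⋀ G :=
        and_congr (or_congr (refl _) (and_congr (refl _) hg.symm)) hg.symm

theorem IsFTerm.neg_or_and {G : STerm A} (hG : IsFTerm G) (x y : STerm A) :
    (∼x ⋁ y) ⋀ G ≐ (x ⋁ G) ⋀ (y ⋀ G) := by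
  obtain ⟨g, hg⟩ := hG.exists_eq_and_ff
  calc (∼x ⋁ y) ⋀ G ≐ (∼x ⋁ y) ⋀ (g ⋀ .ff) := and_congr (refl _) hg
    _ ≐ (x ⋁ (g ⋀ .ff)) ⋀ (y ⋀ (g ⋀ .ff)) := neg_or_and_and_ff _ _ _
    _ ≐ (x ⋁ G) ⋀ (y ⋀ G) :=
        and_congr (or_congr (refl _) hg.symm) (and_congr (refl _) hg.symm)

theorem IsFTerm.and_or {G : STerm A} (hG : IsFTerm G) (x y : STerm A) :
    (x ⋀ y) ⋁ G ≐ (x ⋁ G) ⋀ (y ⋁ G) := by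
  obtain ⟨g, hg⟩ := hG.exists_eq_and_ff
  calc (x ⋀ y) ⋁ G ≐ (x ⋀ y) ⋁ (g ⋀ .ff) := or_congr (refl _) hg
    _ ≐ (x ⋁ (g ⋀ .ff)) ⋀ (y ⋁ (g ⋀ .ff)) := F10 _ _ _
    _ ≐ (x ⋁ G) ⋀ (y ⋁ G) := and_congr (or_congr (refl _) hg.symm) (or_congr (refl _) hg.symm)

theorem IsFTerm.neg_and {G : STerm A} (hG : IsFTerm G) (x : STerm A) :
    ∼x ⋀ G ≐ (x ⋁ G) ⋀ .ff := by
  obtain ⟨g, hg⟩ := hG.exists_eq_and_ff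
  calc ∼x ⋀ G ≐ ∼x ⋀ (g ⋀ .ff) := and_congr (refl _) hg
    _ ≐ (∼x ⋀ g) ⋀ .ff := (F7 _ _ _).symm
    _ ≐ (x ⋁ g) ⋀ .ff := (or_and_ff x g).symm
    _ ≐ (x ⋁ (g ⋀ .ff)) ⋀ .ff := or_and_ff_absorb x g
    _ ≐ (x ⋁ G) ⋀ .ff := and_congr (or_congr (refl _) hg.symm) (refl _)


theorem IsFTerm.exists_or_and {y G G₁ : STerm A} (hG : IsFTerm G) (hG₁ : IsFTerm G₁)
    (hyG : y ⋀ G ≐ G₁) (q : STerm A) : ∃ G', IsFTerm G' ∧ (q ⋁ y) ⋀ G ≐ G' := by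
  induction q generalizing y G G₁ with
  | atom a =>
      exact ⟨(atom a ⋁ G₁) ⋀ G, .cons a hG₁ hG,
        (hG.or_and_absorb _ _).trans (and_congr (or_congr (refl _) hyG) (refl _))⟩
  | tt => exact ⟨_, hG, (and_congr (tt_or _) (refl _)).trans (F4 _)⟩
  | ff => exact ⟨_, hG₁, (and_congr (ff_or _) (refl _)).trans hyG⟩
  | neg r ih =>
      obtain ⟨G', hG', h⟩ := ih hG₁ hG (hG.and_absorb G₁)
      exact ⟨G', hG', (hG.neg_or_and r y).trans ((and_congr (refl _) hyG).trans h)⟩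
  | and r s ihr ihs =>
      obtain ⟨G₂, hG₂, h₂⟩ := ihs hG hG₁ (hG₁.and_absorb G)
      obtain ⟨G₃, hG₃, h₃⟩ := ihr hG₂ hG₁ (hG₁.and_absorb G₂)
      refine ⟨G₃, hG₃, ?_⟩
      calc ((r ⋀ s) ⋁ y) ⋀ G ≐ ((r ⋀ s) ⋁ (y ⋀ G)) ⋀ G := hG.or_and_absorb _ _
        _ ≐ ((r ⋀ s) ⋁ G₁) ⋀ G := and_congr (or_congr (refl _) hyG) (refl _)
        _ ≐ ((r ⋁ G₁) ⋀ (s ⋁ G₁)) ⋀ G := and_congr (hG₁.and_or r s) (refl _)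
        _ ≐ (r ⋁ G₁) ⋀ ((s ⋁ G₁) ⋀ G) := F7 _ _ _
        _ ≐ (r ⋁ G₁) ⋀ G₂ := and_congr (refl _) h₂
        _ ≐ G₃ := h₃
  | or r s ihr ihs =>
      obtain ⟨G₂, hG₂, h₂⟩ := ihs hG hG₁ hyG
      obtain ⟨G₃, hG₃, h₃⟩ := ihr hG hG₂ h₂
      exact ⟨G₃, hG₃, (and_congr (or_assoc _ _ _) (refl _)).trans h₃⟩

theorem IsFTerm.exists_and {G : STerm A} (hG : IsFTerm G) (q : STerm A) :
    ∃ G', IsFTerm G' ∧ q ⋀ G ≐ G' := by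
  induction q generalizing G with
  | atom a => exact ⟨(atom a ⋁ .ff) ⋀ G, .cons a .ff hG, and_congr (F5 _).symm (refl _)⟩
  | tt => exact ⟨G, hG, F4 G⟩
  | ff => exact ⟨.ff, .ff, F6 G⟩
  | neg r _ =>
      obtain ⟨G', hG', h⟩ := IsFTerm.ff.exists_or_and hG (hG.and_absorb .ff) r
      exact ⟨G', hG', (hG.neg_and r).trans h⟩
  | and r s ihr ihs =>
      obtain ⟨G₁, hG₁, h₁⟩ := ihs hG
      obtain ⟨G₂, hG₂, h₂⟩ := ihr hG₁
      exact ⟨G₂, hG₂, (F7 _ _ _).trans ((and_congr (refl _) h₁).trans h₂)⟩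
  | or r s _ ihs =>
      obtain ⟨G₁, hG₁, h₁⟩ := ihs hG
      exact hG.exists_or_and hG₁ h₁ r

theorem IsTTerm.or_and {H : STerm A} (hH : IsTTerm H) (x y : STerm A) :
    (x ⋁ y) ⋀ H ≐ (x ⋀ H) ⋁ (y ⋀ H) := by
  obtain ⟨h, hh⟩ := hH.exists_eq_or_tt
  calc (x ⋁ y) ⋀ H ≐ (x ⋁ y) ⋀ (h ⋁ .tt) := and_congr (refl _) hh
    _ ≐ (x ⋀ (h ⋁ .tt)) ⋁ (y ⋀ (h ⋁ .tt)) := or_and_or_tt _ _ _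
    _ ≐ (x ⋀ H) ⋁ (y ⋀ H) := or_congr (and_congr (refl _) hh.symm) (and_congr (refl _) hh.symm)

theorem IsTTerm.and_or_and {H : STerm A} (hH : IsTTerm H) (x P y : STerm A) :
    ((x ⋀ P) ⋁ y) ⋀ H ≐ (x ⋀ (P ⋀ H)) ⋁ (y ⋀ H) :=
  (hH.or_and _ _).trans (or_congr (F7 _ _ _) (refl _))

theorem IsTTerm.exists_and {P Q : STerm A} (hP : IsTTerm P) (hQ : IsTTerm Q) :
    ∃ R, IsTTerm R ∧ P ⋀ Q ≐ R := by
  induction hP with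
  | tt => exact ⟨Q, hQ, F4 Q⟩
  | cons a _ _ ih₁ ih₂ =>
      obtain ⟨R₁, hR₁, e₁⟩ := ih₁
      obtain ⟨R₂, hR₂, e₂⟩ := ih₂
      exact ⟨_, .cons a hR₁ hR₂,
        (hQ.and_or_and _ _ _).trans (or_congr (and_congr (refl _) e₁) e₂)⟩

theorem IsStarTerm.exists_and_tTerm {P Q : STerm A} (hP : IsStarTerm P) (hQ : IsTTerm Q) :
    ∃ P', IsStarTerm P' ∧ P ⋀ Q ≐ P' := by
  induction hP with
  | lit hL =>
      cases hL with
      | pos a hP hG =>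
          obtain ⟨R, hR, e⟩ := hP.exists_and hQ
          exact ⟨_, .lit (.pos a hR hG),
            (hQ.and_or_and _ _ _).trans (or_congr (and_congr (refl _) e) (hG.and_absorb Q))⟩
      | neg a hP hG =>
          obtain ⟨R, hR, e⟩ := hP.exists_and hQ
          exact ⟨_, .lit (.neg a hR hG),
            (hQ.and_or_and _ _ _).trans (or_congr (and_congr (refl _) e) (hG.and_absorb Q))⟩
  | and _ _ _ ih₂ =>
      obtain ⟨P₂, hP₂, e₂⟩ := ih₂
      exact ⟨_ ⋀ P₂, .and ‹_› hP₂, (F7 _ _ _).trans (and_congr (refl _) e₂)⟩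
  | or _ _ ih₁ ih₂ =>
      obtain ⟨P₁, hP₁, e₁⟩ := ih₁
      obtain ⟨P₂, hP₂, e₂⟩ := ih₂
      exact ⟨P₁ ⋁ P₂, .or hP₁ hP₂, (hQ.or_and _ _).trans (or_congr e₁ e₂)⟩

theorem IsTTerm.exists_neg {P : STerm A} (hP : IsTTerm P) : ∃ G, IsFTerm G ∧ ∼P ≐ G := by
  induction hP with
  | tt => exact ⟨.ff, .ff, neg_tt⟩
  | cons a _ _ ih₁ ih₂ =>
      obtain ⟨G₁, hG₁, e₁⟩ := ih₁
      obtain ⟨G₂, hG₂, e₂⟩ := ih₂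
      refine ⟨(atom a ⋁ G₂) ⋀ G₁, .cons a hG₂ hG₁, ?_⟩
      calc ∼((atom a ⋀ _) ⋁ _) ≐ ∼(atom a ⋀ _) ⋀ ∼_ := neg_or _ _
        _ ≐ (∼atom a ⋁ ∼_) ⋀ ∼_ := and_congr (neg_and _ _) (refl _)
        _ ≐ (∼atom a ⋁ G₁) ⋀ G₂ := and_congr (or_congr (refl _) e₁) e₂
        _ ≐ (atom a ⋁ G₂) ⋀ (G₁ ⋀ G₂) := hG₂.neg_or_and _ _
        _ ≐ (atom a ⋁ G₂) ⋀ G₁ := and_congr (refl _) (hG₁.and_absorb G₂)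

theorem IsFTerm.exists_neg {G : STerm A} (hG : IsFTerm G) : ∃ H, IsTTerm H ∧ ∼G ≐ H := by
  obtain ⟨G', hG', h⟩ := hG.dual.exists_neg
  exact ⟨G'.dual, hG'.dual, by simpa [STerm.dual] using h.dual⟩

theorem IsTTerm.exists_neg_and_or {P G : STerm A} (hP : IsTTerm P) (hG : IsFTerm G)
    (x : STerm A) :
    ∃ H G', IsTTerm H ∧ IsFTerm G' ∧ ∼((x ⋀ P) ⋁ G) ≐ (∼x ⋀ H) ⋁ G' := by
  obtain ⟨G', hG', e₁⟩ := hP.exists_neg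
  obtain ⟨H, hH, e₂⟩ := hG.exists_neg
  obtain ⟨g, hg⟩ := hG'.exists_eq_and_ff
  obtain ⟨h, hh⟩ := hH.exists_eq_or_tt
  refine ⟨H, G', hH, hG', ?_⟩
  calc ∼((x ⋀ P) ⋁ G) ≐ ∼(x ⋀ P) ⋀ ∼G := neg_or _ _
    _ ≐ (∼x ⋁ ∼P) ⋀ ∼G := and_congr (neg_and _ _) (refl _)
    _ ≐ (∼x ⋁ (g ⋀ .ff)) ⋀ (h ⋁ .tt) := and_congr (or_congr (refl _) (e₁.trans hg)) (e₂.trans hh)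
    _ ≐ (∼x ⋀ (h ⋁ .tt)) ⋁ (g ⋀ .ff) := or_and_ff_and_or_tt _ _ _
    _ ≐ (∼x ⋀ H) ⋁ G' := or_congr (and_congr (refl _) hh.symm) hg.symm

theorem IsLiteral.exists_neg {P : STerm A} (hP : IsLiteral P) :
    ∃ P', IsLiteral P' ∧ ∼P ≐ P' := by
  cases hP with
  | pos a hP hG =>
      obtain ⟨H, G', hH, hG', e⟩ := hP.exists_neg_and_or hG (atom a)
      exact ⟨_, .neg a hH hG', e⟩
  | neg a hP hG =>
      obtain ⟨H, G', hH, hG', e⟩ := hP.exists_neg_and_or hG (∼atom a)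
      exact ⟨_, .pos a hH hG', e.trans (or_congr (and_congr (F3 _) (refl _)) (refl _))⟩

theorem IsStarTerm.exists_neg {P : STerm A} (hP : IsStarTerm P) :
    ∃ P', IsStarTerm P' ∧ ∼P ≐ P' := by
  induction hP with
  | lit hL =>
      obtain ⟨P', hP', e⟩ := hL.exists_neg
      exact ⟨P', .lit hP', e⟩
  | and _ _ ih₁ ih₂ =>
      obtain ⟨P₁, hP₁, e₁⟩ := ih₁
      obtain ⟨P₂, hP₂, e₂⟩ := ih₂
      exact ⟨P₁ ⋁ P₂, .or hP₁ hP₂, (neg_and _ _).trans (or_congr e₁ e₂)⟩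
  | or _ _ ih₁ ih₂ =>
      obtain ⟨P₁, hP₁, e₁⟩ := ih₁
      obtain ⟨P₂, hP₂, e₂⟩ := ih₂
      exact ⟨P₁ ⋀ P₂, .and hP₁ hP₂, (neg_or _ _).trans (and_congr e₁ e₂)⟩

theorem IsTTerm.neg_and {P : STerm A} (hP : IsTTerm P) (Q : STerm A) : ∼(P ⋀ Q) ≐ P ⋀ ∼Q := by
  obtain ⟨p, hp⟩ := hP.exists_eq_or_tt
  calc ∼(P ⋀ Q) ≐ ∼((p ⋁ .tt) ⋀ Q) := neg_congr (and_congr hp (refl _))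
    _ ≐ ∼((p ⋀ .ff) ⋁ Q) := neg_congr (F9 p Q).symm
    _ ≐ ∼(p ⋀ .ff) ⋀ ∼Q := neg_or _ _
    _ ≐ (p ⋁ .tt) ⋀ ∼Q := and_congr (neg_and_ff p) (refl _)
    _ ≐ P ⋀ ∼Q := and_congr hp.symm (refl _)

theorem IsNormalForm.exists_neg {N : STerm A} (hN : IsNormalForm N) :
    ∃ N', IsNormalForm N' ∧ ∼N ≐ N' := by
  cases hN with
  | tTerm h =>
      obtain ⟨G, hG, e⟩ := h.exists_neg
      exact ⟨G, .fTerm hG, e⟩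
  | fTerm h =>
      obtain ⟨H, hH, e⟩ := h.exists_neg
      exact ⟨H, .tTerm hH, e⟩
  | mix hP hQ =>
      obtain ⟨Q', hQ', e⟩ := hQ.exists_neg
      exact ⟨_ ⋀ Q', .mix hP hQ', (hP.neg_and _).trans (and_congr (refl _) e)⟩

theorem IsNormalForm.exists_and {N₁ N₂ : STerm A} (h₁ : IsNormalForm N₁) (h₂ : IsNormalForm N₂) :
    ∃ N, IsNormalForm N ∧ N₁ ⋀ N₂ ≐ N := by
  cases h₂ with
  | fTerm hG =>
      obtain ⟨G, hG', e⟩ := hG.exists_and N₁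
      exact ⟨G, .fTerm hG', e⟩
  | tTerm hQ =>
      cases h₁ with
      | tTerm hP =>
          obtain ⟨R, hR, e⟩ := hP.exists_and hQ
          exact ⟨R, .tTerm hR, e⟩
      | fTerm hG => exact ⟨N₁, .fTerm hG, hG.and_absorb N₂⟩
      | mix hP hS =>
          obtain ⟨S', hS', e⟩ := hS.exists_and_tTerm hQ
          exact ⟨_ ⋀ S', .mix hP hS', (F7 _ _ _).trans (and_congr (refl _) e)⟩
  | @mix Q S hQ hS =>
      cases h₁ with
      | tTerm hP =>
          obtain ⟨R, hR, e⟩ := hP.exists_and hQ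
          exact ⟨R ⋀ S, .mix hR hS, (F7 _ _ _).symm.trans (and_congr e (refl _))⟩
      | fTerm hG => exact ⟨N₁, .fTerm hG, hG.and_absorb _⟩
      | mix hP hS₁ =>
          obtain ⟨S', hS', e⟩ := hS₁.exists_and_tTerm hQ
          refine ⟨_ ⋀ (S' ⋀ S), .mix hP (.and hS' hS), ?_⟩
          calc (_ ⋀ _) ⋀ (Q ⋀ S) ≐ _ ⋀ (_ ⋀ (Q ⋀ S)) := F7 _ _ _
            _ ≐ _ ⋀ ((_ ⋀ Q) ⋀ S) := and_congr (refl _) (F7 _ _ _).symm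
            _ ≐ _ ⋀ (S' ⋀ S) := and_congr (refl _) (and_congr e (refl _))

theorem exists_isNormalForm (P : STerm A) : ∃ N, IsNormalForm N ∧ P ≐ N := by
  induction P with
  | atom a =>
      refine ⟨.tt ⋀ ((atom a ⋀ .tt) ⋁ .ff), .mix .tt (.lit (.pos a .tt .ff)), ?_⟩
      exact (F4 _).symm.trans (and_congr (refl _) ((F5 _).trans (and_tt _)).symm)
  | tt => exact ⟨.tt, .tTerm .tt, refl _⟩
  | ff => exact ⟨.ff, .fTerm .ff, refl _⟩
  | neg P ih =>
      obtain ⟨N, hN, e⟩ := ih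
      obtain ⟨N', hN', e'⟩ := hN.exists_neg
      exact ⟨N', hN', (neg_congr e).trans e'⟩
  | and P Q ihP ihQ =>
      obtain ⟨N₁, hN₁, e₁⟩ := ihP
      obtain ⟨N₂, hN₂, e₂⟩ := ihQ
      obtain ⟨N, hN, e⟩ := hN₁.exists_and hN₂
      exact ⟨N, hN, (and_congr e₁ e₂).trans e⟩
  | or P Q ihP ihQ =>
      obtain ⟨N₁, hN₁, e₁⟩ := ihP
      obtain ⟨N₂, hN₂, e₂⟩ := ihQ
      obtain ⟨M₁, hM₁, f₁⟩ := hN₁.exists_neg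
      obtain ⟨M₂, hM₂, f₂⟩ := hN₂.exists_neg
      obtain ⟨M, hM, f⟩ := hM₁.exists_and hM₂
      obtain ⟨M', hM', f'⟩ := hM.exists_neg
      refine ⟨M', hM', ?_⟩
      calc P ⋁ Q ≐ ∼(∼P ⋀ ∼Q) := F2 _ _
        _ ≐ ∼(M₁ ⋀ M₂) :=
            neg_congr (and_congr ((neg_congr e₁).trans f₁) ((neg_congr e₂).trans f₂))
        _ ≐ ∼M := neg_congr f
        _ ≐ M' := f'


theorem se_atom_and_or {P : STerm A} (hP : IsTTree (se P)) (a : A) (Q : STerm A) :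
    se ((atom a ⋀ P) ⋁ Q) = .node (se P) a (se Q) := by
  simp [se, hP.repl_eq]

theorem se_neg_atom_and_or {P : STerm A} (hP : IsTTree (se P)) (a : A) (Q : STerm A) :
    se ((∼atom a ⋀ P) ⋁ Q) = .node (se Q) a (se P) := by
  simp [se, hP.repl_eq]

theorem se_atom_or_and {P : STerm A} (hP : IsFTree (se P)) (a : A) (Q : STerm A) :
    se ((atom a ⋁ P) ⋀ Q) = .node (se Q) a (se P) := by
  simp [se, hP.repl_eq]

theorem IsTTerm.isTTree_se {P : STerm A} (h : IsTTerm P) : IsTTree (se P) := by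
  induction h with
  | tt => exact isTTree_leafT
  | cons a _ _ ih₁ ih₂ => rw [se_atom_and_or ih₁]; exact isTTree_node.2 ⟨ih₁, ih₂⟩

theorem IsFTerm.isFTree_se {P : STerm A} (h : IsFTerm P) : IsFTree (se P) := by
  induction h with
  | ff => simp [IsFTree, se]
  | cons a _ _ ih₁ ih₂ => rw [se_atom_or_and ih₁]; exact fun h => h.elim ih₂ ih₁

theorem IsLiteral.isLitTree_se {P : STerm A} (h : IsLiteral P) : IsLitTree (se P) := by
  cases h with
  | pos a hP hG => rw [se_atom_and_or hP.isTTree_se]; exact .pos a hP.isTTree_se hG.isFTree_se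
  | neg a hP hG => rw [se_neg_atom_and_or hP.isTTree_se]; exact .neg a hP.isTTree_se hG.isFTree_se

theorem IsStarTerm.isStarTree_se {P : STerm A} (h : IsStarTerm P) : IsStarTree (se P) := by
  induction h with
  | lit hL => exact .lit hL.isLitTree_se
  | and _ _ ih₁ ih₂ => exact .conj ih₁ ih₂
  | or _ _ ih₁ ih₂ => exact .disj ih₁ ih₂

theorem IsTTerm.eq_of_se_eq {P Q : STerm A} (hP : IsTTerm P) (hQ : IsTTerm Q)
    (h : se P = se Q) : P = Q := by
  induction hP generalizing Q with
  | tt => cases hQ with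
    | tt => rfl
    | cons b hQ₁ _ => rw [se_atom_and_or hQ₁.isTTree_se] at h; simp [se] at h
  | cons a hP₁ _ ih₁ ih₂ => cases hQ with
    | tt => rw [se_atom_and_or hP₁.isTTree_se] at h; simp [se] at h
    | cons b hQ₁ hQ₂ =>
        rw [se_atom_and_or hP₁.isTTree_se, se_atom_and_or hQ₁.isTTree_se, node.injEq] at h
        rw [ih₁ hQ₁ h.1, h.2.1, ih₂ hQ₂ h.2.2]

theorem IsFTerm.eq_of_se_eq {P Q : STerm A} (hP : IsFTerm P) (hQ : IsFTerm Q)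
    (h : se P = se Q) : P = Q := by
  induction hP generalizing Q with
  | ff => cases hQ with
    | ff => rfl
    | cons b hQ₁ _ => rw [se_atom_or_and hQ₁.isFTree_se] at h; simp [se] at h
  | cons a hP₁ _ ih₁ ih₂ => cases hQ with
    | ff => rw [se_atom_or_and hP₁.isFTree_se] at h; simp [se] at h
    | cons b hQ₁ hQ₂ =>
        rw [se_atom_or_and hP₁.isFTree_se, se_atom_or_and hQ₁.isFTree_se, node.injEq] at h
        rw [ih₁ hQ₁ h.2.2, h.2.1, ih₂ hQ₂ h.1]

theorem IsLiteral.eq_of_se_eq {P Q : STerm A} (hP : IsLiteral P) (hQ : IsLiteral Q)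
    (h : se P = se Q) : P = Q := by
  cases hP with
  | pos a hP hG => cases hQ with
    | pos b hQ hH =>
        rw [se_atom_and_or hP.isTTree_se, se_atom_and_or hQ.isTTree_se, node.injEq] at h
        rw [hP.eq_of_se_eq hQ h.1, h.2.1, hG.eq_of_se_eq hH h.2.2]
    | neg b hQ hH =>
        rw [se_atom_and_or hP.isTTree_se, se_neg_atom_and_or hQ.isTTree_se, node.injEq] at h
        exact absurd (h.1 ▸ hP.isTTree_se.hasT) hH.isFTree_se
  | neg a hP hG => cases hQ with
    | pos b hQ hH =>
        rw [se_neg_atom_and_or hP.isTTree_se, se_atom_and_or hQ.isTTree_se, node.injEq] at h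
        exact absurd (h.1 ▸ hQ.isTTree_se.hasT) hG.isFTree_se
    | neg b hQ hH =>
        rw [se_neg_atom_and_or hP.isTTree_se, se_neg_atom_and_or hQ.isTTree_se, node.injEq] at h
        rw [hP.eq_of_se_eq hQ h.2.2, h.2.1, hG.eq_of_se_eq hH h.1]

end STerm

namespace ETree

open STerm

variable {A : Type}

theorem IsTTree.exists_isTTerm {X : ETree A} (hX : IsTTree X) : ∃ P, IsTTerm P ∧ se P = X := by
  induction X with
  | leafT => exact ⟨.tt, .tt, rfl⟩
  | leafF => simp [IsTTree] at hX
  | node l a r ihl ihr =>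
      obtain ⟨P, hP, rfl⟩ := ihl (isTTree_node.1 hX).1
      obtain ⟨Q, hQ, rfl⟩ := ihr (isTTree_node.1 hX).2
      exact ⟨_, .cons a hP hQ, se_atom_and_or hP.isTTree_se a Q⟩

theorem IsFTree.exists_isFTerm {X : ETree A} (hX : IsFTree X) : ∃ P, IsFTerm P ∧ se P = X := by
  induction X with
  | leafT => simp [IsFTree] at hX
  | leafF => exact ⟨.ff, .ff, rfl⟩
  | node l a r ihl ihr =>
      simp only [IsFTree, HasT, not_or] at hX
      obtain ⟨Q, hQ, rfl⟩ := ihl hX.1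
      obtain ⟨P, hP, rfl⟩ := ihr hX.2
      exact ⟨_, .cons a hP hQ, se_atom_or_and hP.isFTree_se a Q⟩

theorem IsLitTree.exists_isLiteral {X : ETree A} (hX : IsLitTree X) :
    ∃ P, IsLiteral P ∧ se P = X := by
  cases hX with
  | pos a hS hU =>
      obtain ⟨P, hP, rfl⟩ := hS.exists_isTTerm
      obtain ⟨G, hG, rfl⟩ := hU.exists_isFTerm
      exact ⟨_, .pos a hP hG, se_atom_and_or hP.isTTree_se a G⟩
  | neg a hS hU =>
      obtain ⟨P, hP, rfl⟩ := hS.exists_isTTerm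
      obtain ⟨G, hG, rfl⟩ := hU.exists_isFTerm
      exact ⟨_, .neg a hP hG, se_neg_atom_and_or hP.isTTree_se a G⟩

theorem IsStarTree.exists_isStarTerm {X : ETree A} (hX : IsStarTree X) :
    ∃ P, IsStarTerm P ∧ se P = X := by
  induction hX with
  | lit hL =>
      obtain ⟨P, hP, rfl⟩ := hL.exists_isLiteral
      exact ⟨P, .lit hP, rfl⟩
  | conj _ _ ih₁ ih₂ =>
      obtain ⟨P, hP, rfl⟩ := ih₁
      obtain ⟨Q, hQ, rfl⟩ := ih₂
      exact ⟨P ⋀ Q, .and hP hQ, rfl⟩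
  | disj _ _ ih₁ ih₂ =>
      obtain ⟨P, hP, rfl⟩ := ih₁
      obtain ⟨Q, hQ, rfl⟩ := ih₂
      exact ⟨P ⋁ Q, .or hP hQ, rfl⟩

end ETree
namespace STerm

open EqFSCL

def StarInjBelow (A : Type) (n : ℕ) : Prop :=
  ∀ P Q : STerm A, IsStarTerm P → IsStarTerm Q → size (se P) < n → se P = se Q → P ≐ Q

theorem IsStarTerm.and_eqFSCL_of_split {n : ℕ} (ih : StarInjBelow A n)
    {P₁ P₂ Q₁ Q₂ : STerm A} {M : ETree A} (hP₁ : IsStarTerm P₁) (hP₂ : IsStarTerm P₂)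
    (hQ₁ : IsStarTerm Q₁) (hQ₂ : IsStarTerm Q₂) (hsize : size (se (P₁ ⋀ P₂)) ≤ n)
    (hM : StarOrT M) (h₁ : se Q₁ = replT (se P₁) M) (h₂ : se P₂ = replT M (se Q₂)) :
    P₁ ⋀ P₂ ≐ Q₁ ⋀ Q₂ := by
  have hse : se (Q₁ ⋀ Q₂) = se (P₁ ⋀ P₂) := by rw [se_and, se_and, h₁, h₂, replT_replT]
  have hP₂_lt : size (se P₂) < n := by
    have := hP₁.isStarTree_se.size_lt_replT (se P₂); rw [se_and] at hsize; omega
  have hQ₁_lt : size (se Q₁) < n := by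
    have := hQ₁.isStarTree_se.starOrT.size_lt_replT hQ₂.isStarTree_se
    rw [← se_and, hse] at this; omega
  rcases hM with rfl | hM
  · rw [replT_leafT_right] at h₁
    exact and_congr (ih Q₁ P₁ hQ₁ hP₁ hQ₁_lt h₁).symm (ih P₂ Q₂ hP₂ hQ₂ hP₂_lt h₂)
  obtain ⟨m, hm, rfl⟩ := hM.exists_isStarTerm
  calc P₁ ⋀ P₂ ≐ P₁ ⋀ (m ⋀ Q₂) := and_congr (refl _) (ih P₂ _ hP₂ (.and hm hQ₂) hP₂_lt h₂)
    _ ≐ (P₁ ⋀ m) ⋀ Q₂ := (F7 _ _ _).symm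
    _ ≐ Q₁ ⋀ Q₂ := and_congr (ih Q₁ _ hQ₁ (.and hP₁ hm) hQ₁_lt h₁).symm (refl _)

theorem IsStarTerm.and_eqFSCL {n : ℕ} (ih : StarInjBelow A n)
    {P₁ P₂ Q₁ Q₂ : STerm A} (hP₁ : IsStarTerm P₁) (hP₂ : IsStarTerm P₂)
    (hQ₁ : IsStarTerm Q₁) (hQ₂ : IsStarTerm Q₂) (hsize : size (se (P₁ ⋀ P₂)) ≤ n)
    (h : se (P₁ ⋀ P₂) = se (Q₁ ⋀ Q₂)) : P₁ ⋀ P₂ ≐ Q₁ ⋀ Q₂ := by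
  rcases (hP₁.and hP₂).isStarTree_se.starFacts.andSplitsAssoc hP₁.isStarTree_se.starOrT
    hP₂.isStarTree_se hQ₁.isStarTree_se.starOrT hQ₂.isStarTree_se rfl h with
    ⟨M, hM, h₁, h₂⟩ | ⟨M, hM, h₁, h₂⟩
  · exact and_eqFSCL_of_split ih hP₁ hP₂ hQ₁ hQ₂ hsize hM h₁ h₂
  · exact (and_eqFSCL_of_split ih hQ₁ hQ₂ hP₁ hP₂ (h ▸ hsize) hM h₁ h₂).symm

theorem IsStarTerm.exists_neg_or {P₁ P₂ : STerm A} (hP₁ : IsStarTerm P₁) (hP₂ : IsStarTerm P₂) :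
    ∃ S₁ S₂, IsStarTerm S₁ ∧ IsStarTerm S₂ ∧ ∼(P₁ ⋁ P₂) ≐ S₁ ⋀ S₂ := by
  obtain ⟨S₁, hS₁, e₁⟩ := hP₁.exists_neg
  obtain ⟨S₂, hS₂, e₂⟩ := hP₂.exists_neg
  exact ⟨S₁, S₂, hS₁, hS₂, (neg_or _ _).trans (and_congr e₁ e₂)⟩

theorem IsStarTerm.or_eqFSCL {n : ℕ} (ih : StarInjBelow A n)
    {P₁ P₂ Q₁ Q₂ : STerm A} (hP₁ : IsStarTerm P₁) (hP₂ : IsStarTerm P₂)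
    (hQ₁ : IsStarTerm Q₁) (hQ₂ : IsStarTerm Q₂) (hsize : size (se (P₁ ⋁ P₂)) ≤ n)
    (h : se (P₁ ⋁ P₂) = se (Q₁ ⋁ Q₂)) : P₁ ⋁ P₂ ≐ Q₁ ⋁ Q₂ := by
  obtain ⟨S₁, S₂, hS₁, hS₂, eP⟩ := hP₁.exists_neg_or hP₂
  obtain ⟨T₁, T₂, hT₁, hT₂, eQ⟩ := hQ₁.exists_neg_or hQ₂
  have hS : se (S₁ ⋀ S₂) = swap (se (P₁ ⋁ P₂)) := eP.se_eq.symm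
  have e : S₁ ⋀ S₂ ≐ T₁ ⋀ T₂ :=
    and_eqFSCL ih hS₁ hS₂ hT₁ hT₂ (by rwa [hS, size_swap])
      (by rw [hS, h, ← eQ.se_eq, se_neg])
  calc P₁ ⋁ P₂ ≐ ∼∼(P₁ ⋁ P₂) := (F3 _).symm
    _ ≐ ∼∼(Q₁ ⋁ Q₂) := neg_congr ((eP.trans e).trans eQ.symm)
    _ ≐ Q₁ ⋁ Q₂ := F3 _

theorem IsStarTerm.eqFSCL_of_se_eq {P Q : STerm A} (hP : IsStarTerm P) (hQ : IsStarTerm Q)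
    (h : se P = se Q) : P ≐ Q := by
  induction hn : size (se P) using Nat.strong_induction_on generalizing P Q with
  | _ n ih =>
  have ih' : StarInjBelow A n := fun P Q hP hQ hlt h => ih _ hlt hP hQ h rfl
  cases hP with
  | lit hL =>
      cases hQ with
      | lit hL' => exact hL.eq_of_se_eq hL' h ▸ refl _
      | and hQ₁ hQ₂ =>
          exact absurd h (hL.isLitTree_se.ne_replT hQ₁.isStarTree_se hQ₂.isStarTree_se)
      | or hQ₁ hQ₂ =>
          exact absurd h (hL.isLitTree_se.ne_replF hQ₁.isStarTree_se hQ₂.isStarTree_se)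
  | and hP₁ hP₂ =>
      cases hQ with
      | lit hL' =>
          exact absurd h.symm (hL'.isLitTree_se.ne_replT hP₁.isStarTree_se hP₂.isStarTree_se)
      | and hQ₁ hQ₂ => exact and_eqFSCL ih' hP₁ hP₂ hQ₁ hQ₂ hn.le h
      | or hQ₁ hQ₂ =>
          exact absurd h ((hP₁.and hP₂).isStarTree_se.starFacts.andOrExclusive
            hP₁.isStarTree_se hP₂.isStarTree_se hQ₁.isStarTree_se hQ₂.isStarTree_se rfl)
  | or hP₁ hP₂ =>
      cases hQ with
      | lit hL' =>
          exact absurd h.symm (hL'.isLitTree_se.ne_replF hP₁.isStarTree_se hP₂.isStarTree_se)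
      | and hQ₁ hQ₂ =>
          exact absurd h.symm ((hQ₁.and hQ₂).isStarTree_se.starFacts.andOrExclusive
            hQ₁.isStarTree_se hQ₂.isStarTree_se hP₁.isStarTree_se hP₂.isStarTree_se rfl)
      | or hQ₁ hQ₂ => exact or_eqFSCL ih' hP₁ hP₂ hQ₁ hQ₂ hn.le h

theorem IsNormalForm.eqFSCL_of_se_eq {P Q : STerm A} (hP : IsNormalForm P)
    (hQ : IsNormalForm Q) (h : se P = se Q) : P ≐ Q := by
  have mixed_se : ∀ {P Q : STerm A}, IsTTerm P → IsStarTerm Q → Mixed (se (P ⋀ Q)) :=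
    fun hP hQ => mixed_replT hP.isTTree_se.hasT hQ.isStarTree_se.mixed
  cases hP with
  | tTerm hP =>
      cases hQ with
      | tTerm hQ => exact hP.eq_of_se_eq hQ h ▸ refl _
      | fTerm hQ => exact absurd (h ▸ hP.isTTree_se.hasT) hQ.isFTree_se
      | mix hQ₁ hQ₂ => exact absurd (h ▸ (mixed_se hQ₁ hQ₂).2) hP.isTTree_se
  | fTerm hP =>
      cases hQ with
      | tTerm hQ => exact absurd (h ▸ hQ.isTTree_se.hasT) hP.isFTree_se
      | fTerm hQ => exact hP.eq_of_se_eq hQ h ▸ refl _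
      | mix hQ₁ hQ₂ => exact absurd (h ▸ (mixed_se hQ₁ hQ₂).1) hP.isFTree_se
  | mix hP₁ hP₂ =>
      cases hQ with
      | tTerm hQ => exact absurd (h ▸ (mixed_se hP₁ hP₂).2) hQ.isTTree_se
      | fTerm hQ => exact absurd (h ▸ (mixed_se hP₁ hP₂).1) hQ.isFTree_se
      | mix hQ₁ hQ₂ =>
          obtain ⟨e₁, e₂⟩ := eq_and_eq_of_replT_eq hP₁.isTTree_se hQ₁.isTTree_se
            hP₂.isStarTree_se.starFacts.noTPrefix hQ₂.isStarTree_se.starFacts.noTPrefix h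
          exact and_congr (hP₁.eq_of_se_eq hQ₁ e₁ ▸ refl _) (hP₂.eqFSCL_of_se_eq hQ₂ e₂)

end STerm

theorem EqFSCL.of_se_eq {P Q : STerm A} (h : se P = se Q) : P ≐ Q := by
  obtain ⟨N₁, hN₁, e₁⟩ := STerm.exists_isNormalForm P
  obtain ⟨N₂, hN₂, e₂⟩ := STerm.exists_isNormalForm Q
  have hN : se N₁ = se N₂ := by rw [← e₁.se_eq, ← e₂.se_eq, h]
  exact e₁.trans ((hN₁.eqFSCL_of_se_eq hN₂ hN).trans e₂.symm)

end Terms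

theorem eqFSCL_complete_general {A : Type} (P Q : STerm A) :
    EqFSCL P Q ↔ se P = se Q :=
  ⟨EqFSCL.se_eq, EqFSCL.of_se_eq⟩

/-- Completeness of EqFSCL for closed terms: `EqFSCL ⊢ P = Q` iff `se(P) = se(Q)`. -/
theorem eqFSCL_complete {A : Type} [Nonempty A] (P Q : STerm A) :
    EqFSCL P Q ↔ se P = se Q :=
  eqFSCL_complete_general P Q
end

section
/- From the axiom subset {F2, F4, F5, F6, F7, F9} (i.e., EqFSCL without F1, F3, F8 and F10), axioms F1 and F3 are derivable: ⊢ F = ¬T, and for every closed term P ∈ S_A, ⊢ ¬¬P = P. -/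
/-- Derivability from the axiom subset {F2, F4, F5, F6, F7, F9}:
the least congruence (w.r.t. `¬`, `∧❛`, `∨❛`) on closed terms containing all closed
substitution instances of these six axioms. -/
inductive EqFSCLm {A : Type} : STerm A → STerm A → Prop
  | refl (P) : EqFSCLm P P
  | symm {P Q} : EqFSCLm P Q → EqFSCLm Q P
  | trans {P Q R} : EqFSCLm P Q → EqFSCLm Q R → EqFSCLm P R
  | neg_congr {P Q} : EqFSCLm P Q → EqFSCLm (.neg P) (.neg Q)
  | and_congr {P P' Q Q'} : EqFSCLm P Q → EqFSCLm P' Q' → EqFSCLm (.and P P') (.and Q Q')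
  | or_congr {P P' Q Q'} : EqFSCLm P Q → EqFSCLm P' Q' → EqFSCLm (.or P P') (.or Q Q')
  | F2 (x y) : EqFSCLm (.or x y) (.neg (.and (.neg x) (.neg y)))
  | F4 (x) : EqFSCLm (.and .tt x) x
  | F5 (x) : EqFSCLm (.or x .ff) x
  | F6 (x) : EqFSCLm (.and .ff x) .ff
  | F7 (x y z) : EqFSCLm (.and (.and x y) z) (.and x (.and y z))
  | F9 (x y) : EqFSCLm (.or (.and x .ff) y) (.and (.or x .tt) y)

/-!
From F5 and F2 every `x` equals `¬(¬x ∧❛ ¬F)`; applied to `¬x ∧❛ ¬F` itself this gives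
`¬x ∧❛ ¬F = ¬(x ∧❛ ¬F)`. The instances `x = F` and `x = T` of these two identities (simplified
by F6 and F4) yield `¬¬F = F` and `¬F = T`, hence F1. With F1, F9 at `x = T` gives `F ∨❛ y = y`,
and then `¬¬P = ¬(¬F ∧❛ ¬P) = F ∨❛ P = P`.
-/

namespace EqFSCLm

variable {A : Type}

instance : Trans (@EqFSCLm A) (@EqFSCLm A) (@EqFSCLm A) := ⟨trans⟩

local infix:25 " ≐ " => EqFSCLm
local prefix:max "∼" => STerm.neg
local infixr:35 " ∧❛ " => STerm.and
local infixr:30 " ∨❛ " => STerm.or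

theorem neg_neg_and_neg_ff (x : STerm A) : ∼(∼x ∧❛ ∼.ff) ≐ x :=
  (F2 x .ff).symm.trans (F5 x)

theorem neg_and_neg_ff (x : STerm A) : ∼x ∧❛ ∼.ff ≐ ∼(x ∧❛ ∼.ff) :=
  calc ∼x ∧❛ ∼.ff ≐ ∼(∼(∼x ∧❛ ∼.ff) ∧❛ ∼.ff) := (neg_neg_and_neg_ff _).symm
    _ ≐ ∼(x ∧❛ ∼.ff) := neg_congr (and_congr (neg_neg_and_neg_ff x) (refl _))

theorem neg_neg_ff : ∼∼(.ff : STerm A) ≐ .ff :=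
  calc ∼∼(.ff : STerm A) ≐ ∼∼(.ff ∧❛ ∼.ff) := neg_congr (neg_congr (F6 _).symm)
    _ ≐ ∼(∼.ff ∧❛ ∼.ff) := neg_congr (neg_and_neg_ff .ff).symm
    _ ≐ .ff := neg_neg_and_neg_ff .ff

theorem neg_ff : ∼(.ff : STerm A) ≐ .tt :=
  calc ∼(.ff : STerm A) ≐ ∼∼∼.ff := neg_congr neg_neg_ff.symm
    _ ≐ ∼∼(.tt ∧❛ ∼.ff) := neg_congr (neg_congr (F4 _).symm)
    _ ≐ ∼(∼.tt ∧❛ ∼.ff) := neg_congr (neg_and_neg_ff .tt).symm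
    _ ≐ .tt := neg_neg_and_neg_ff .tt

theorem F1 : (.ff : STerm A) ≐ ∼.tt :=
  neg_neg_ff.symm.trans (neg_congr neg_ff)

theorem or_tt_tt : (.tt ∨❛ .tt : STerm A) ≐ .tt :=
  calc (.tt ∨❛ .tt : STerm A) ≐ ∼(∼.tt ∧❛ ∼.tt) := F2 _ _
    _ ≐ ∼(.ff ∧❛ ∼.tt) := neg_congr (and_congr F1.symm (refl _))
    _ ≐ ∼.ff := neg_congr (F6 _)
    _ ≐ .tt := neg_ff

theorem ff_or (y : STerm A) : .ff ∨❛ y ≐ y :=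
  calc .ff ∨❛ y ≐ (.tt ∧❛ .ff) ∨❛ y := or_congr (F4 _).symm (refl y)
    _ ≐ (.tt ∨❛ .tt) ∧❛ y := F9 _ _
    _ ≐ .tt ∧❛ y := and_congr or_tt_tt (refl y)
    _ ≐ y := F4 y

theorem F3 (x : STerm A) : ∼∼x ≐ x :=
  calc ∼∼x ≐ ∼(.tt ∧❛ ∼x) := neg_congr (F4 _).symm
    _ ≐ ∼(∼.ff ∧❛ ∼x) := neg_congr (and_congr neg_ff.symm (refl _))
    _ ≐ .ff ∨❛ x := (F2 _ _).symm
    _ ≐ x := ff_or x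

end EqFSCLm

theorem derivable_F1_F3_general {A : Type} :
    EqFSCLm (STerm.ff : STerm A) (.neg .tt) ∧
      ∀ P : STerm A, EqFSCLm (.neg (.neg P)) P :=
  ⟨EqFSCLm.F1, EqFSCLm.F3⟩

/-- Axioms F1 and F3 are derivable from {F2, F4, F5, F6, F7, F9}. -/
theorem derivable_F1_F3 {A : Type} [Nonempty A] :
    EqFSCLm (STerm.ff : STerm A) (.neg .tt) ∧
      ∀ P : STerm A, EqFSCLm (.neg (.neg P)) P :=
  derivable_F1_F3_general
end

section
/- (Independence of axiom F10.) Consider the algebra M with domain {0,1,2,3}, with constants T interpreted as 1 and F as 0, with negation given by ¬0=1, ¬1=0, ¬2=2, ¬3=3, with sequential conjunction ∧❛ given by the table (rows = left argument): 0∧❛y = 0 for all y; 1∧❛y = y; 2∧❛0=0, 2∧❛1=2, 2∧❛2=0, 2∧❛3=0; 3∧❛y = 3 for all y; and with sequential disjunction ∨❛ given by: 0∨❛y = y; 1∨❛y = 1 for all y; 2∨❛0=2, 2∨❛1=1, 2∨❛2=1, 2∨❛3=1; 3∨❛y = 3 for all y. Then the equations (F2) x ∨❛ y = ¬(¬x ∧❛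 ¬y), (F4) T ∧❛ x = x, (F5) x ∨❛ F = x, (F6) F ∧❛ x = F, (F7) (x ∧❛ y) ∧❛ z = x ∧❛ (y ∧❛ z), (F8) ¬x ∧❛ F = x ∧❛ F, and (F9) (x ∧❛ F) ∨❛ y = (x ∨❛ T) ∧❛ y hold for all elements x, y, z of M, whereas (F10) (x ∧❛ y) ∨❛ (z ∧❛ F) = (x ∨❛ (z ∧❛ F)) ∧❛ (y ∨❛ (z ∧❛ F)) fails for x = y = 2, z = 3: the left-hand side evaluates to 3 and the right-hand side to 1. -/
/-- Negation of the four-element independence model. -/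
def neg4 : Fin 4 → Fin 4 := ![1, 0, 2, 3]

/-- Sequential conjunction of the four-element independence model. -/
def and4 (x y : Fin 4) : Fin 4 :=
  ![![0, 0, 0, 0], ![0, 1, 2, 3], ![0, 2, 0, 0], ![3, 3, 3, 3]] x y

/-- Sequential disjunction of the four-element independence model. -/
def or4 (x y : Fin 4) : Fin 4 :=
  ![![0, 1, 2, 3], ![1, 1, 1, 1], ![2, 1, 1, 1], ![3, 3, 3, 3]] x y

theorem or4_eq_neg4_and4_neg4 (x y : Fin 4) : or4 x y = neg4 (and4 (neg4 x) (neg4 y)) := by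
  revert x y; decide

theorem one_and4 (x : Fin 4) : and4 1 x = x := by
  revert x; decide

theorem or4_zero (x : Fin 4) : or4 x 0 = x := by
  revert x; decide

theorem zero_and4 (x : Fin 4) : and4 0 x = 0 := by
  revert x; decide

theorem and4_assoc (x y z : Fin 4) : and4 (and4 x y) z = and4 x (and4 y z) := by
  revert x y z; decide

theorem neg4_and4_zero (x : Fin 4) : and4 (neg4 x) 0 = and4 x 0 := by
  revert x; decide

theorem and4_zero_or4 (x y : Fin 4) : or4 (and4 x 0) y = and4 (or4 x 1) y := by
  revert x y; decide

/-- Independence of axiom F10: in the model with domain `Fin 4`, `T = 1`, `F = 0`,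
axioms (F2), (F4), (F5), (F6), (F7), (F8), (F9) hold, while (F10) fails at
`x = y = 2`, `z = 3`, its left-hand side being `3` and its right-hand side `1`. -/
theorem F10_independent :
    (∀ x y : Fin 4, or4 x y = neg4 (and4 (neg4 x) (neg4 y))) ∧
    (∀ x : Fin 4, and4 1 x = x) ∧
    (∀ x : Fin 4, or4 x 0 = x) ∧
    (∀ x : Fin 4, and4 0 x = 0) ∧
    (∀ x y z : Fin 4, and4 (and4 x y) z = and4 x (and4 y z)) ∧
    (∀ x : Fin 4, and4 (neg4 x) 0 = and4 x 0) ∧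
    (∀ x y : Fin 4, or4 (and4 x 0) y = and4 (or4 x 1) y) ∧
    or4 (and4 2 2) (and4 3 0) = 3 ∧
    and4 (or4 2 (and4 3 0)) (or4 2 (and4 3 0)) = 1 :=
  ⟨or4_eq_neg4_and4_neg4, one_and4, or4_zero, zero_and4, and4_assoc, neg4_and4_zero,
    and4_zero_or4, rfl, rfl⟩
end

section
/- For every closed term P over the conditional signature Σ_CP(A) there exists a basic form Q such that CP ⊢ P = Q. -/
/-- Closed terms over the conditional signature `Σ_CP(A) = {_◁_▷_, T, F, a | a ∈ A}`.
`cond x y z` denotes Hoare's conditional `x ◁ y ▷ z` (if `y` then `x` else `z`). -/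
inductive CTerm (A : Type) : Type
  | atom : A → CTerm A
  | tt : CTerm A
  | ff : CTerm A
  | cond : CTerm A → CTerm A → CTerm A → CTerm A

/-- Derivability from the axiom set CP: the least congruence (w.r.t. the conditional)
on closed terms containing all closed substitution instances of (CP1)-(CP4). -/
inductive CPDer {A : Type} : CTerm A → CTerm A → Prop
  | refl (P) : CPDer P P
  | symm {P Q} : CPDer P Q → CPDer Q P
  | trans {P Q R} : CPDer P Q → CPDer Q R → CPDer P R
  | cond_congr {P P' Q Q' R R'} : CPDer P P' → CPDer Q Q' → CPDer R R' →
      CPDer (.cond P Q R) (.cond P' Q' R')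
  | CP1 (x y) : CPDer (.cond x .tt y) x
  | CP2 (x y) : CPDer (.cond x .ff y) y
  | CP3 (x) : CPDer (.cond .tt x .ff) x
  | CP4 (x y z u v) : CPDer (.cond x (.cond y z u) v)
      (.cond (.cond x y v) z (.cond x u v))

/-- Basic forms over `A`: `t ::= T | F | t ◁ a ▷ t`. -/
inductive IsBasicForm {A : Type} : CTerm A → Prop
  | tt : IsBasicForm .tt
  | ff : IsBasicForm .ff
  | node (a : A) {P Q} : IsBasicForm P → IsBasicForm Q →
      IsBasicForm (.cond P (.atom a) Q)

/-!
Induct on the term. Once `p`, `q`, `r` are basic forms, `p ◁ q ▷ r` equals `q` with its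
`T`-leaves replaced by `p` and its `F`-leaves by `r`: CP4 pushes `p ◁ _ ▷ r` through each
atom test of `q`, and CP1/CP2 resolve it at the leaves.
-/

namespace CTerm

variable {A : Type}

def graft : CTerm A → CTerm A → CTerm A → CTerm A
  | tt, P, _ => P
  | ff, _, R => R
  | atom a, _, _ => atom a
  | cond x y z, P, R => cond (x.graft P R) y (z.graft P R)

end CTerm

variable {A : Type} {P Q R : CTerm A}

theorem IsBasicForm.graft (hQ : IsBasicForm Q) (hP : IsBasicForm P) (hR : IsBasicForm R) :
    IsBasicForm (Q.graft P R) := by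
  induction hQ with
  | tt => exact hP
  | ff => exact hR
  | node a _ _ ih₁ ih₂ => exact .node a ih₁ ih₂

theorem CPDer.cond_of_isBasicForm (hQ : IsBasicForm Q) : CPDer (.cond P Q R) (Q.graft P R) := by
  induction hQ with
  | tt => exact .CP1 P R
  | ff => exact .CP2 P R
  | node a _ _ ih₁ ih₂ => exact (CPDer.CP4 _ _ _ _ _).trans (.cond_congr ih₁ (.refl (.atom a)) ih₂)

theorem exists_basic_form_general {A : Type} (P : CTerm A) :
    ∃ Q : CTerm A, IsBasicForm Q ∧ CPDer P Q := by
  induction P with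
  | atom a => exact ⟨.cond .tt (.atom a) .ff, .node a .tt .ff, .symm (.CP3 _)⟩
  | tt => exact ⟨.tt, .tt, .refl _⟩
  | ff => exact ⟨.ff, .ff, .refl _⟩
  | cond P Q R ihP ihQ ihR =>
    obtain ⟨p, hp, dp⟩ := ihP
    obtain ⟨q, hq, dq⟩ := ihQ
    obtain ⟨r, hr, dr⟩ := ihR
    exact ⟨q.graft p r, hq.graft hp hr,
      (CPDer.cond_congr dp dq dr).trans (.cond_of_isBasicForm hq)⟩

/-- Every closed conditional term is CP-derivably equal to a basic form. -/
theorem exists_basic_form {A : Type} [Nonempty A] (P : CTerm A) :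
    ∃ Q : CTerm A, IsBasicForm Q ∧ CPDer P Q :=
  exists_basic_form_general P
end
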